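/- arXiv:2508.20008 — 2 statements merged into one kernel-verified Lean document; each statement's English description precedes it below -/
import Mathlib

section
/- Let H be an irreducible positive analytic system with generating function solution Y. Then every coordinate Y_i has infinite support, and all coordinates Y_1,…,Y_m have the same period q. If moreover the system is nonlinear, then for every i, Supp(Y_i) ⊆ {val(Y_i) + q·k : k ∈ ℕ} and the set {k ∈ ℕ : y_i(val(Y_i) + q·k) = 0} is finite. -/
open scoped ENNReal NNReal Topology
open Filter

open scoped ENNReal Topology
open Filter
namespace Aux18


theorem prod_tsum : ∀ {M : ℕ} (β : Fin M → Type) (f : ∀ j, β j → ℝ≥0∞),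
    (∏ j, ∑' b, f j b) = ∑' g : (∀ j, β j), ∏ j, f j (g j) := by
  intro M
  induction M with
  | zero =>
    intro β f
    rw [tsum_eq_single (default : ∀ j, β j) (fun b hb => absurd (Subsingleton.elim b default) hb)]
    simp
  | succ M ih =>
    intro β f
    calc (∏ j, ∑' b, f j b)
        = (∑' b, f 0 b) * ∏ j : Fin M, ∑' b, f j.succ b := Fin.prod_univ_succ _
      _ = (∑' b, f 0 b) * ∑' g : ∀ j : Fin M, β j.succ, ∏ j, f j.succ (g j) := by
          rw [ih]
      _ = ∑' b, ∑' g : ∀ j : Fin M, β j.succ, f 0 b * ∏ j, f j.succ (g j) := by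
          rw [← ENNReal.tsum_mul_right]
          exact tsum_congr fun b => (ENNReal.tsum_mul_left).symm
      _ = ∑' p : β 0 × (∀ j : Fin M, β j.succ), f 0 p.1 * ∏ j, f j.succ (p.2 j) :=
          (ENNReal.tsum_prod' (f := fun p : β 0 × (∀ j : Fin M, β j.succ) => f 0 p.1 * ∏ j, f j.succ (p.2 j))).symm
      _ = ∑' g : (∀ j, β j), ∏ j, f j (g j) := by
          rw [← Equiv.tsum_eq (Fin.consEquiv β) (fun g => ∏ j, f j (g j))]
          refine tsum_congr fun p => ?_
          rw [Fin.prod_univ_succ]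
          simp [Fin.consEquiv]



lemma summable_of_le_pt {a : ℕ → ℝ} (ha : ∀ n, 0 ≤ a n) {x x0 : ℝ} (hx : 0 ≤ x) (hxx : x ≤ x0)
    (hs : Summable fun n => a n * x0 ^ n) : Summable fun n => a n * x ^ n := by
  refine hs.of_nonneg_of_le (fun n => mul_nonneg (ha n) (pow_nonneg hx n)) (fun n => ?_)
  exact mul_le_mul_of_nonneg_left (pow_le_pow_left₀ hx hxx n) (ha n)

lemma summable_shift {a : ℕ → ℝ} {x : ℝ} (hx : 0 < x)
    (hs : Summable fun n => a n * x ^ n) : Summable fun n => a (n + 1) * x ^ n := by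
  have h1 : Summable fun n => a (n + 1) * x ^ (n + 1) := (summable_nat_add_iff 1).2 hs
  refine (h1.mul_right x⁻¹).congr fun n => ?_
  field_simp [pow_succ]
  ring

lemma tsum_split {a : ℕ → ℝ} {x : ℝ} (hs : Summable fun n => a n * x ^ n) :
    ∑' n, a n * x ^ n = a 0 + x * ∑' n, a (n + 1) * x ^ n := by
  rw [Summable.tsum_eq_zero_add hs]
  simp only [pow_zero, mul_one, pow_succ]
  congr 1
  rw [← tsum_mul_left]
  exact tsum_congr fun n => by ring

lemma tendsto_head {a : ℕ → ℝ} (ha : ∀ n, 0 ≤ a n) {x0 : ℝ} (hx0 : 0 < x0)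
    (hs : Summable fun n => a n * x0 ^ n) :
    Tendsto (fun x => ∑' n, a n * x ^ n) (𝓝[>] 0) (𝓝 (a 0)) := by
  have hC : ∀ x, 0 < x → x ≤ x0 → |(∑' n, a n * x ^ n) - a 0| ≤ x * ∑' n, a (n + 1) * x0 ^ n := by
    intro x hx hxx
    have hsx : Summable fun n => a n * x ^ n := summable_of_le_pt ha hx.le hxx hs
    rw [tsum_split hsx, add_sub_cancel_left, abs_mul, abs_of_pos hx]
    refine mul_le_mul_of_nonneg_left ?_ hx.le
    rw [abs_of_nonneg (tsum_nonneg fun n => mul_nonneg (ha _) (pow_nonneg hx.le n))]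
    exact Summable.tsum_le_tsum (fun n => mul_le_mul_of_nonneg_left (pow_le_pow_left₀ hx.le hxx n) (ha _))
      (summable_shift hx hsx) (summable_shift hx0 hs)
  rw [tendsto_iff_dist_tendsto_zero]
  have hxto : Tendsto (fun x : ℝ => x * ∑' n, a (n + 1) * x0 ^ n) (𝓝[>] 0) (𝓝 0) := by
    have := (continuous_id.mul (continuous_const : Continuous fun _ : ℝ =>
      ∑' n, a (n + 1) * x0 ^ n)).tendsto (0:ℝ)
    have h2 : Tendsto (fun x : ℝ => x * ∑' n, a (n + 1) * x0 ^ n) (𝓝[>] 0) (𝓝 ((0:ℝ) * ∑' n, a (n + 1) * x0 ^ n)) := this.mono_left nhdsWithin_le_nhds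
    rwa [zero_mul] at h2
  refine squeeze_zero' (Eventually.of_forall fun x => dist_nonneg) ?_ hxto
  filter_upwards [Ioc_mem_nhdsGT hx0] with x hx
  rw [Real.dist_eq]
  exact hC x hx.1 hx.2

lemma head_eq (a b : ℕ → ℝ) (ha : ∀ k, 0 ≤ a k) (hb : ∀ k, 0 ≤ b k)
    (x0 : ℝ) (hx0 : 0 < x0) (hsa : Summable fun k => a k * x0 ^ k)
    (hsb : Summable fun k => b k * x0 ^ k)
    (h : ∀ x, 0 < x → x ≤ x0 → (∑' k, a k * x ^ k) = ∑' k, b k * x ^ k) : a 0 = b 0 := by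
  refine tendsto_nhds_unique (tendsto_head ha hx0 hsa) ?_
  refine (tendsto_head hb hx0 hsb).congr' ?_
  filter_upwards [Ioc_mem_nhdsGT hx0] with x hx
  exact (h x hx.1 hx.2).symm

lemma coeff_unique : ∀ (n : ℕ) (a b : ℕ → ℝ), (∀ k, 0 ≤ a k) → (∀ k, 0 ≤ b k) →
    ∀ x0 : ℝ, 0 < x0 → (Summable fun k => a k * x0 ^ k) → (Summable fun k => b k * x0 ^ k) →
    (∀ x, 0 < x → x ≤ x0 → (∑' k, a k * x ^ k) = ∑' k, b k * x ^ k) → a n = b n := by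
  intro n
  induction n with
  | zero => exact fun a b ha hb x0 hx0 hsa hsb h => head_eq a b ha hb x0 hx0 hsa hsb h
  | succ n ih =>
    intro a b ha hb x0 hx0 hsa hsb h
    have h0 : a 0 = b 0 := head_eq a b ha hb x0 hx0 hsa hsb h
    have h' : ∀ x, 0 < x → x ≤ x0 →
        (∑' k, a (k + 1) * x ^ k) = ∑' k, b (k + 1) * x ^ k := by
      intro x hx hxx
      have hsax := summable_of_le_pt ha hx.le hxx hsa
      have hsbx := summable_of_le_pt hb hx.le hxx hsb
      have heq := h x hx hxx
      rw [tsum_split hsax, tsum_split hsbx, h0] at heq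
      exact mul_left_cancel₀ hx.ne' (by linarith)
    exact ih (fun k => a (k + 1)) (fun k => b (k + 1)) (fun k => ha _) (fun k => hb _)
      x0 hx0 (summable_shift hx0 hsa) (summable_shift hx0 hsb) h'





lemma enn_coeff_unique (a b : ℕ → ℝ≥0∞) (x0 : ℝ) (hx0 : 0 < x0)
    (hfa : (∑' n, a n * (ENNReal.ofReal x0) ^ n) ≠ ⊤)
    (hfb : (∑' n, b n * (ENNReal.ofReal x0) ^ n) ≠ ⊤)
    (h : ∀ x : ℝ, 0 < x → x ≤ x0 →
      (∑' n, a n * (ENNReal.ofReal x) ^ n) = ∑' n, b n * (ENNReal.ofReal x) ^ n) :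
    a = b := by
  have hX0 : (0:ℝ≥0∞) < ENNReal.ofReal x0 := ENNReal.ofReal_pos.2 hx0
  have hane : ∀ n, a n ≠ ⊤ := by
    intro n hn
    apply hfa
    refine ENNReal.eq_top_of_forall_nnreal_le fun r => le_trans ?_ (ENNReal.le_tsum n)
    rw [hn, ENNReal.top_mul (pow_ne_zero n hX0.ne')]
    exact le_top
  have hbne : ∀ n, b n ≠ ⊤ := by
    intro n hn
    apply hfb
    refine ENNReal.eq_top_of_forall_nnreal_le fun r => le_trans ?_ (ENNReal.le_tsum n)
    rw [hn, ENNReal.top_mul (pow_ne_zero n hX0.ne')]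
    exact le_top
  have key : ∀ (c : ℕ → ℝ≥0∞), (∀ n, c n ≠ ⊤) → ∀ x : ℝ, 0 ≤ x →
      (∑' n, (c n).toReal * x ^ n) = (∑' n, c n * (ENNReal.ofReal x) ^ n).toReal := by
    intro c hc x hx
    rw [ENNReal.tsum_toReal_eq (fun n => ENNReal.mul_ne_top (hc n)
      (ENNReal.pow_ne_top ENNReal.ofReal_ne_top))]
    exact tsum_congr fun n => by
      rw [ENNReal.toReal_mul, ENNReal.toReal_pow, ENNReal.toReal_ofReal hx]
  have hsa : Summable fun n => (a n).toReal * x0 ^ n := by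
    refine (ENNReal.summable_toReal hfa).congr fun n => ?_
    rw [ENNReal.toReal_mul, ENNReal.toReal_pow, ENNReal.toReal_ofReal hx0.le]
  have hsb : Summable fun n => (b n).toReal * x0 ^ n := by
    refine (ENNReal.summable_toReal hfb).congr fun n => ?_
    rw [ENNReal.toReal_mul, ENNReal.toReal_pow, ENNReal.toReal_ofReal hx0.le]
  have heq : ∀ x, 0 < x → x ≤ x0 →
      (∑' n, (a n).toReal * x ^ n) = ∑' n, (b n).toReal * x ^ n := by
    intro x hx hxx
    rw [key a hane x hx.le, key b hbne x hx.le, h x hx hxx]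
  funext n
  have := coeff_unique n (fun k => (a k).toReal) (fun k => (b k).toReal)
    (fun k => ENNReal.toReal_nonneg) (fun k => ENNReal.toReal_nonneg) x0 hx0 hsa hsb heq
  exact (ENNReal.toReal_eq_toReal_iff' (hane n) (hbne n)).1 this

end Aux18



namespace AnalyticComb

/-- A positive analytic system in dimension `m`: nonnegative real coefficients indexed by
multi-indices in `ℕ^{m+1}`. -/
structure PosSystem (m : ℕ) where
  c : Fin m → (Fin (m + 1) → ℕ) → ℝ
  nonneg : ∀ i d, 0 ≤ c i d

variable {m : ℕ}

/-- The point `(z, Y) ∈ ℝ^{m+1}`. -/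
def vec (z : ℝ) (Y : Fin m → ℝ) : Fin (m + 1) → ℝ := Fin.cons z Y

/-- General term of the series defining `H_i` at `x`. -/
def term (S : PosSystem m) (i : Fin m) (x : Fin (m + 1) → ℝ) (d : Fin (m + 1) → ℕ) : ℝ :=
  S.c i d * ∏ j, x j ^ d j

/-- `x` belongs to the domain of convergence `D(H)`: all `m` series converge absolutely. -/
def ConvAt (S : PosSystem m) (x : Fin (m + 1) → ℝ) : Prop :=
  ∀ i, Summable fun d => |term S i x d|

/-- The value `H(x) ∈ ℝ^m`. -/
noncomputable def Hval (S : PosSystem m) (x : Fin (m + 1) → ℝ) : Fin m → ℝ :=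
  fun i => ∑' d, term S i x d

/-- General term of the termwise-differentiated series `∂H_i/∂Y_j` at `x`. -/
def jacTerm (S : PosSystem m) (i j : Fin m) (x : Fin (m + 1) → ℝ)
    (d : Fin (m + 1) → ℕ) : ℝ :=
  S.c i d * (d j.succ : ℝ) * ∏ k, x k ^ (if k = j.succ then d k - 1 else d k)

/-- Absolute convergence of all entries of the Jacobian `∂H/∂Y` at `x`. -/
def JacConvAt (S : PosSystem m) (x : Fin (m + 1) → ℝ) : Prop :=
  ∀ i j, Summable fun d => |jacTerm S i j x d|

/-- The Jacobian matrix `∂H/∂Y(x)`. -/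
noncomputable def jac (S : PosSystem m) (x : Fin (m + 1) → ℝ) : Matrix (Fin m) (Fin m) ℝ :=
  Matrix.of fun i j => ∑' d, jacTerm S i j x d

/-- Entries of the Jacobian, as sums in `[0,+∞]` (convention `∞·0 = 0`). -/
noncomputable def jacEnn (S : PosSystem m) (x : Fin (m + 1) → ℝ) (i j : Fin m) : ℝ≥0∞ :=
  ∑' d, ENNReal.ofReal (jacTerm S i j x d)

/-- General term of the termwise twice-differentiated series `∂²H_l/∂Y_i∂Y_j` at `x`. -/
def jac2Term (S : PosSystem m) (l i j : Fin m) (x : Fin (m + 1) → ℝ)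
    (d : Fin (m + 1) → ℕ) : ℝ :=
  S.c l d * (d i.succ : ℝ) * ((d j.succ - if i = j then 1 else 0 : ℕ) : ℝ) *
    ∏ k, x k ^ (d k - (if k = i.succ then 1 else 0) - (if k = j.succ then 1 else 0))

/-- The value of `∂²H_l/∂Y_i∂Y_j` at `x`. -/
noncomputable def jac2 (S : PosSystem m) (l i j : Fin m) (x : Fin (m + 1) → ℝ) : ℝ :=
  ∑' d, jac2Term S l i j x d

/-- Spectral radius: largest modulus of a complex eigenvalue of a real matrix. -/
noncomputable def specRad {n : Type*} [Fintype n] [DecidableEq n] (A : Matrix n n ℝ) : ℝ≥0∞ :=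
  spectralRadius ℂ (A.map Complex.ofReal)

/-- `Λ_H(x)`: spectral radius of the Jacobian matrix at `x`. -/
noncomputable def lambda (S : PosSystem m) (x : Fin (m + 1) → ℝ) : ℝ≥0∞ :=
  specRad (jac S x)

/-- The iterates `U^{[k]}` (`U^{[0]} = 0`, `U^{[k+1]} = H(0, U^{[k]})`). -/
noncomputable def uIter (S : PosSystem m) : ℕ → Fin m → ℝ
  | 0 => 0
  | k + 1 => Hval S (vec 0 (uIter S k))

/-- The system is well founded. -/
def IsWF (S : PosSystem m) : Prop :=
  (∀ k ≤ m, ConvAt S (vec 0 (uIter S k))) ∧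
    JacConvAt S (vec 0 (uIter S m)) ∧
    IsNilpotent (jac S (vec 0 (uIter S m)))

/-- The system is linear: no coefficient with total `Y`-degree at least `2`. -/
def IsLinear (S : PosSystem m) : Prop :=
  ∀ i d, 2 ≤ ∑ j : Fin m, d j.succ → S.c i d = 0

/-- `∂H_i/∂Y_j` is not identically zero on `D(H)`. -/
def DependsOn (S : PosSystem m) (i j : Fin m) : Prop :=
  ∃ x : Fin (m + 1) → ℝ, ConvAt S x ∧ (Summable fun d => |jacTerm S i j x d|) ∧
    jac S x i j ≠ 0

/-- For every pair `(i,j)` there is a chain `i = i₀, …, i_k = j`, `k ≥ 1`, of nonvanishing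
partial derivatives. -/
def StronglyConnected (S : PosSystem m) : Prop :=
  ∀ i j : Fin m, ∃ k : ℕ, 1 ≤ k ∧ ∃ p : Fin (k + 1) → Fin m,
    p 0 = i ∧ p (Fin.last k) = j ∧ ∀ t : Fin k, DependsOn S (p t.castSucc) (p t.succ)

/-- Radius of convergence of a real power series given by its coefficients. -/
noncomputable def radius (a : ℕ → ℝ) : ℝ≥0∞ :=
  ⨆ (r : ℝ≥0) (_ : Summable fun n => |a n| * (r : ℝ) ^ n), (r : ℝ≥0∞)

/-- Evaluation of a vector of power series at a real point. -/
noncomputable def eval (y : Fin m → ℕ → ℝ) (x : ℝ) : Fin m → ℝ :=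
  fun i => ∑' n, y i n * x ^ n

/-- Convergence of all the coordinate power series at `x`. -/
def EvalConv (y : Fin m → ℕ → ℝ) (x : ℝ) : Prop :=
  ∀ i, Summable fun n => y i n * x ^ n

/-- A generating function solution of a (well-founded) system. -/
structure GFSol (S : PosSystem m) where
  y : Fin m → ℕ → ℝ
  nonneg : ∀ i n, 0 ≤ y i n
  rad_pos : 0 < ⨅ i, radius (y i)
  init : eval y 0 = uIter S m
  conv : ∀ x : ℝ, 0 ≤ x → ENNReal.ofReal x < ⨅ i, radius (y i) →
    ConvAt S (vec x (eval y x))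
  fixed : ∀ x : ℝ, 0 ≤ x → ENNReal.ofReal x < ⨅ i, radius (y i) →
    eval y x = Hval S (vec x (eval y x))

/-- The radius of convergence `ρ` of the solution. -/
noncomputable def GFSol.rad {S : PosSystem m} (sol : GFSol S) : ℝ≥0∞ :=
  ⨅ i, radius (sol.y i)

/-- The system is zero-free: no coordinate of the solution is the zero power series. -/
def GFSol.ZeroFree {S : PosSystem m} (sol : GFSol S) : Prop :=
  ∀ i, ∃ n, sol.y i n ≠ 0

/-- The system is irreducible. -/
def GFSol.Irreducible {S : PosSystem m} (sol : GFSol S) : Prop :=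
  IsWF S ∧ sol.ZeroFree ∧ StronglyConnected S

/-- `τ_i = lim_{x→ρ⁻} Y_i(x) ∈ [0,+∞]`, as a monotone supremum. -/
noncomputable def GFSol.tau {S : PosSystem m} (sol : GFSol S) (i : Fin m) : ℝ≥0∞ :=
  ⨆ (x : ℝ) (_ : 0 ≤ x) (_ : ENNReal.ofReal x < sol.rad), ENNReal.ofReal (eval sol.y x i)

/-- The Newton iterates at `a`. -/
noncomputable def newton (S : PosSystem m) (a : ℝ) : ℕ → Fin m → ℝ
  | 0 => 0
  | n + 1 =>
      newton S a n +
        ((1 - jac S (vec a (newton S a n)))⁻¹).mulVec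
          (Hval S (vec a (newton S a n)) - newton S a n)

/-- The Newton step at `y^{[k]}` is legitimate, so that `y^{[k+1]}` is defined. -/
def NewtonStepOK (S : PosSystem m) (a : ℝ) (k : ℕ) : Prop :=
  ConvAt S (vec a (newton S a k)) ∧ JacConvAt S (vec a (newton S a k)) ∧
    IsUnit (1 - jac S (vec a (newton S a k))).det

/-- The characteristic map `F(z,Y) = (Y − H(z,Y), det(I − ∂H/∂Y(z,Y)))`. -/
noncomputable def fchar (S : PosSystem m) (x : Fin (m + 1) → ℝ) : Fin (m + 1) → ℝ :=
  Fin.snoc (fun i : Fin m => x i.succ - Hval S x i) ((1 - jac S x).det)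

/-- The Jacobian matrix of the characteristic map. -/
noncomputable def jchar (S : PosSystem m) (x : Fin (m + 1) → ℝ) :
    Matrix (Fin (m + 1)) (Fin (m + 1)) ℝ :=
  Matrix.of fun i j => fderiv ℝ (fchar S) x (Pi.single j (1 : ℝ)) i

/-- The map `F(z,Y) = (Y − H(z,Y), Y₁ − 1)`. -/
noncomputable def fone (S : PosSystem m) (x : Fin (m + 1) → ℝ) : Fin (m + 1) → ℝ :=
  Fin.snoc (fun i : Fin m => x i.succ - Hval S x i) (x 1 - 1)

/-- The Jacobian matrix of `fone`. -/
noncomputable def jone (S : PosSystem m) (x : Fin (m + 1) → ℝ) :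
    Matrix (Fin (m + 1)) (Fin (m + 1)) ℝ :=
  Matrix.of fun i j => fderiv ℝ (fone S) x (Pi.single j (1 : ℝ)) i

/-- Term of the Jacobian entries at a complex point. -/
def jacTermC (S : PosSystem m) (i j : Fin m) (x : Fin (m + 1) → ℂ)
    (d : Fin (m + 1) → ℕ) : ℂ :=
  (S.c i d : ℂ) * (d j.succ : ℂ) * ∏ k, x k ^ (if k = j.succ then d k - 1 else d k)

/-- The Jacobian matrix at a complex point. -/
noncomputable def jacC (S : PosSystem m) (x : Fin (m + 1) → ℂ) : Matrix (Fin m) (Fin m) ℂ :=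
  Matrix.of fun i j => ∑' d, jacTermC S i j x d

/-- Evaluation of the solution at a complex point. -/
noncomputable def evalC (y : Fin m → ℕ → ℝ) (w : ℂ) : Fin m → ℂ :=
  fun i => ∑' n, (y i n : ℂ) * w ^ n

/-- `α` (on the circle `|w| = ρ`) is a singularity of the solution: some coordinate admits
no analytic continuation to a neighborhood of `α`. -/
def IsSingularity {S : PosSystem m} (sol : GFSol S) (ρ : ℝ) (α : ℂ) : Prop :=
  ∃ i : Fin m, ¬ ∃ (U : Set ℂ) (g : ℂ → ℂ), IsOpen U ∧ α ∈ U ∧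
    (∀ w ∈ U, AnalyticAt ℂ g w) ∧ ∀ w ∈ U ∩ Metric.ball (0 : ℂ) ρ, g w = evalC sol.y w i

/-- `q` is the period of the power series with coefficient sequence `a`: the differences of
elements of the support generate the subgroup `qℤ` of `ℤ`. -/
def HasPeriod (a : ℕ → ℝ) (q : ℕ) : Prop :=
  (∀ n n' : ℕ, a n ≠ 0 → a n' ≠ 0 → (q : ℤ) ∣ (n : ℤ) - (n' : ℤ)) ∧
    ∀ q' : ℕ, (∀ n n' : ℕ, a n ≠ 0 → a n' ≠ 0 → (q' : ℤ) ∣ (n : ℤ) - (n' : ℤ)) → q' ∣ q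

/-- Valuation: index of the first nonzero coefficient. -/
noncomputable def sVal (a : ℕ → ℝ) : ℕ := sInf {n | a n ≠ 0}

/-! ### Auxiliary: coefficientwise recurrence -/

/-- Type of slot assignments for a multi-index `d`. -/
def Asg (d : Fin (m + 1) → ℕ) : Type := ∀ j : Fin m, Fin (d j.succ) → ℕ

/-- Total weight of a multi-index together with an assignment. -/
def awt (d : Fin (m + 1) → ℕ) (g : Asg d) : ℕ := d 0 + ∑ j, ∑ t, g j t

/-- The `ℝ≥0∞`-valued coefficient contribution of one decomposition. -/
noncomputable def coefE (S : PosSystem m) (y : Fin m → ℕ → ℝ) (i : Fin m)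
    (p : Σ d : Fin (m + 1) → ℕ, Asg d) : ℝ≥0∞ :=
  ENNReal.ofReal (S.c i p.1) * ∏ j, ∏ t, ENNReal.ofReal (y j (p.2 j t))

/-- Coefficient of `x^n` in `H_i(x, Y(x))`, in `ℝ≥0∞`. -/
noncomputable def bcoef (S : PosSystem m) (y : Fin m → ℕ → ℝ) (i : Fin m) (n : ℕ) : ℝ≥0∞ :=
  ∑' p : {p : Σ d : Fin (m + 1) → ℕ, Asg d // awt p.1 p.2 = n}, coefE S y i p.1

lemma ofReal_prod {ι : Type*} (s : Finset ι) (f : ι → ℝ) (hf : ∀ i ∈ s, 0 ≤ f i) :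
    ENNReal.ofReal (∏ i ∈ s, f i) = ∏ i ∈ s, ENNReal.ofReal (f i) := by
  induction s using Finset.cons_induction with
  | empty => simp
  | cons a s ha ih =>
    rw [Finset.prod_cons, Finset.prod_cons, ENNReal.ofReal_mul (hf a (Finset.mem_cons_self a s)),
      ih (fun i hi => hf i (Finset.mem_cons_of_mem hi))]

lemma summable_coeff {S : PosSystem m} (sol : GFSol S) {x : ℝ} (hx : 0 ≤ x)
    (hlt : ENNReal.ofReal x < sol.rad) (i : Fin m) :
    Summable fun n => sol.y i n * x ^ n := by
  have h1 : ENNReal.ofReal x < radius (sol.y i) := lt_of_lt_of_le hlt (iInf_le _ i)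
  rw [radius, lt_iSup_iff] at h1
  obtain ⟨r, h1⟩ := h1
  rw [lt_iSup_iff] at h1
  obtain ⟨hs, h1⟩ := h1
  have hxr : x < (r : ℝ) := by
    rw [← ENNReal.ofReal_coe_nnreal] at h1
    exact (ENNReal.ofReal_lt_ofReal_iff_of_nonneg hx).1 h1
  refine hs.of_nonneg_of_le (fun n => mul_nonneg (sol.nonneg i n) (pow_nonneg hx n))
    (fun n => ?_)
  calc sol.y i n * x ^ n ≤ sol.y i n * (r : ℝ) ^ n :=
        mul_le_mul_of_nonneg_left (pow_le_pow_left₀ hx hxr.le n) (sol.nonneg i n)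
    _ ≤ |sol.y i n| * (r : ℝ) ^ n :=
        mul_le_mul_of_nonneg_right (le_abs_self _) (pow_nonneg r.2 n)

lemma eval_nonneg {S : PosSystem m} (sol : GFSol S) {x : ℝ} (hx : 0 ≤ x) (j : Fin m) :
    0 ≤ eval sol.y x j :=
  tsum_nonneg fun n => mul_nonneg (sol.nonneg j n) (pow_nonneg hx n)

lemma vec_nonneg {x : ℝ} {Y : Fin m → ℝ} (hx : 0 ≤ x) (hY : ∀ j, 0 ≤ Y j) :
    ∀ k, 0 ≤ vec x Y k := by
  intro k
  refine Fin.cases ?_ ?_ k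
  · simpa [vec] using hx
  · intro j; simpa [vec] using hY j

lemma ofReal_eval {S : PosSystem m} (sol : GFSol S) {x : ℝ} (hx : 0 ≤ x)
    (hlt : ENNReal.ofReal x < sol.rad) (j : Fin m) :
    ENNReal.ofReal (eval sol.y x j) =
      ∑' n, ENNReal.ofReal (sol.y j n) * (ENNReal.ofReal x) ^ n := by
  rw [eval, ENNReal.ofReal_tsum_of_nonneg
    (fun n => mul_nonneg (sol.nonneg j n) (pow_nonneg hx n)) (summable_coeff sol hx hlt j)]
  exact tsum_congr fun n => by
    rw [ENNReal.ofReal_mul (sol.nonneg j n), ENNReal.ofReal_pow hx]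

/-- Main analytic identity: the generating function evaluated at `x`, in `ℝ≥0∞`, equals the
power series with coefficients `bcoef`. -/
lemma eval_eq_bcoef {S : PosSystem m} (sol : GFSol S) {x : ℝ} (hx : 0 ≤ x)
    (hlt : ENNReal.ofReal x < sol.rad) (i : Fin m) :
    ENNReal.ofReal (eval sol.y x i) =
      ∑' n, bcoef S sol.y i n * (ENNReal.ofReal x) ^ n := by
  set X := ENNReal.ofReal x with hX
  set v : Fin (m + 1) → ℝ := vec x (eval sol.y x) with hv
  have hvpos : ∀ k, 0 ≤ v k := vec_nonneg hx (eval_nonneg sol hx)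
  have hfix : eval sol.y x i = Hval S v i := congrFun (sol.fixed x hx hlt) i
  have hconv : Summable fun d => term S i v d := by
    refine ((sol.conv x hx hlt) i).congr fun d => ?_
    refine abs_of_nonneg ?_
    exact mul_nonneg (S.nonneg i d) (Finset.prod_nonneg fun k _ => pow_nonneg (hvpos k) _)
  have hterm_nonneg : ∀ d, 0 ≤ term S i v d := fun d =>
    mul_nonneg (S.nonneg i d) (Finset.prod_nonneg fun k _ => pow_nonneg (hvpos k) _)
  -- Step 1: ofReal of the sum of terms
  have step1 : ENNReal.ofReal (eval sol.y x i) =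
      ∑' d, ENNReal.ofReal (term S i v d) := by
    rw [hfix, Hval, ENNReal.ofReal_tsum_of_nonneg hterm_nonneg hconv]
  -- Step 2: per-term expansion
  have step2 : ∀ d : Fin (m + 1) → ℕ, ENNReal.ofReal (term S i v d) =
      ENNReal.ofReal (S.c i d) * (X ^ (d 0) *
        ∏ j, (ENNReal.ofReal (eval sol.y x j)) ^ (d j.succ)) := by
    intro d
    rw [term, ENNReal.ofReal_mul (S.nonneg i d),
      ofReal_prod _ _ (fun k _ => pow_nonneg (hvpos k) _)]
    congr 1
    have : ∀ k, ENNReal.ofReal (v k ^ d k) = (ENNReal.ofReal (v k)) ^ (d k) := fun k =>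
      ENNReal.ofReal_pow (hvpos k) _
    rw [Finset.prod_congr rfl (fun k _ => this k), Fin.prod_univ_succ]
    simp [hv, vec, hX]
  -- Step 3: expand powers of the coordinate series
  have hE : ∀ j : Fin m, ENNReal.ofReal (eval sol.y x j) =
      ∑' n, ENNReal.ofReal (sol.y j n) * X ^ n := fun j => ofReal_eval sol hx hlt j
  have step3 : ∀ d : Fin (m + 1) → ℕ,
      (∏ j, (ENNReal.ofReal (eval sol.y x j)) ^ (d j.succ)) =
      ∑' g : Asg d, ∏ j, ∏ t, (ENNReal.ofReal (sol.y j (g j t)) * X ^ (g j t)) := by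
    intro d
    have per : ∀ j : Fin m, (ENNReal.ofReal (eval sol.y x j)) ^ (d j.succ) =
        ∑' gj : Fin (d j.succ) → ℕ, ∏ t, (ENNReal.ofReal (sol.y j (gj t)) * X ^ (gj t)) := by
      intro j
      rw [hE j]
      have : (∑' n, ENNReal.ofReal (sol.y j n) * X ^ n) ^ (d j.succ) =
          ∏ _t : Fin (d j.succ), ∑' n, ENNReal.ofReal (sol.y j n) * X ^ n := by
        rw [Finset.prod_const, Finset.card_univ, Fintype.card_fin]
      rw [this, Aux18.prod_tsum (fun _ : Fin (d j.succ) => ℕ)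
        (fun _ n => ENNReal.ofReal (sol.y j n) * X ^ n)]
    rw [Finset.prod_congr rfl (fun j _ => per j),
      Aux18.prod_tsum (fun j : Fin m => Fin (d j.succ) → ℕ)
        (fun j gj => ∏ t, (ENNReal.ofReal (sol.y j (gj t)) * X ^ (gj t)))]
    rfl
  -- Step 4: product splitting
  have step4 : ∀ (d : Fin (m + 1) → ℕ) (g : Asg d),
      (∏ j, ∏ t, (ENNReal.ofReal (sol.y j (g j t)) * X ^ (g j t))) =
      (∏ j, ∏ t, ENNReal.ofReal (sol.y j (g j t))) * X ^ (∑ j, ∑ t, g j t) := by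
    intro d g
    calc (∏ j, ∏ t, (ENNReal.ofReal (sol.y j (g j t)) * X ^ (g j t)))
        = ∏ j, ((∏ t, ENNReal.ofReal (sol.y j (g j t))) * X ^ (∑ t, g j t)) := by
          refine Finset.prod_congr rfl fun j _ => ?_
          rw [Finset.prod_mul_distrib, Finset.prod_pow_eq_pow_sum]
      _ = (∏ j, ∏ t, ENNReal.ofReal (sol.y j (g j t))) * X ^ (∑ j, ∑ t, g j t) := by
          rw [Finset.prod_mul_distrib, Finset.prod_pow_eq_pow_sum]
  -- Put together
  have main : ENNReal.ofReal (eval sol.y x i) =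
      ∑' p : Σ d : Fin (m + 1) → ℕ, Asg d, coefE S sol.y i p * X ^ (awt p.1 p.2) := by
    rw [step1, ENNReal.tsum_sigma' (f := fun p : Σ d : Fin (m + 1) → ℕ, Asg d =>
      coefE S sol.y i p * X ^ (awt p.1 p.2))]
    refine tsum_congr fun d => ?_
    rw [step2 d, step3 d, ← ENNReal.tsum_mul_left, ← ENNReal.tsum_mul_left]
    refine tsum_congr fun g => ?_
    rw [step4 d g, coefE, awt, pow_add]
    ring
  rw [main]
  have hfib : (∑' p : Σ d : Fin (m + 1) → ℕ, Asg d, coefE S sol.y i p * X ^ (awt p.1 p.2)) =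
      ∑' n, ∑' p : {p : Σ d : Fin (m + 1) → ℕ, Asg d // awt p.1 p.2 = n},
        coefE S sol.y i p.1 * X ^ (awt p.1.1 p.1.2) := by
    rw [← ((Equiv.sigmaFiberEquiv (fun p : Σ d : Fin (m + 1) → ℕ, Asg d => awt p.1 p.2)).tsum_eq
      (fun p => coefE S sol.y i p * X ^ (awt p.1 p.2)))]
    exact ENNReal.tsum_sigma' _
  rw [hfib]
  refine tsum_congr fun n => ?_
  have hcong : ∀ p : {p : Σ d : Fin (m + 1) → ℕ, Asg d // awt p.1 p.2 = n},
      coefE S sol.y i p.1 * X ^ (awt p.1.1 p.1.2) = coefE S sol.y i p.1 * X ^ n := fun p => by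
    rw [p.2]
  rw [tsum_congr hcong, ENNReal.tsum_mul_right, bcoef]

/-- Coefficientwise recurrence. -/
lemma coef_rec {S : PosSystem m} (sol : GFSol S) (i : Fin m) (n : ℕ) :
    ENNReal.ofReal (sol.y i n) = bcoef S sol.y i n := by
  obtain ⟨x0, hx0, hx0rad⟩ : ∃ x0 : ℝ, 0 < x0 ∧ ENNReal.ofReal x0 < sol.rad := by
    rcases eq_or_ne sol.rad ⊤ with h | h
    · exact ⟨1, one_pos, by rw [h]; exact ENNReal.ofReal_lt_top⟩
    · have hpos : 0 < sol.rad.toReal := ENNReal.toReal_pos (ne_of_gt sol.rad_pos) h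
      refine ⟨sol.rad.toReal / 2, by linarith, ?_⟩
      calc ENNReal.ofReal (sol.rad.toReal / 2) < ENNReal.ofReal sol.rad.toReal := by
            rw [ENNReal.ofReal_lt_ofReal_iff hpos]; linarith
        _ = sol.rad := ENNReal.ofReal_toReal h
  have hmono : ∀ x : ℝ, 0 < x → x ≤ x0 → ENNReal.ofReal x < sol.rad := fun x hx hxx =>
    lt_of_le_of_lt (ENNReal.ofReal_le_ofReal hxx) hx0rad
  have heq : ∀ x : ℝ, 0 < x → x ≤ x0 →
      (∑' k, ENNReal.ofReal (sol.y i k) * (ENNReal.ofReal x) ^ k) =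
      ∑' k, bcoef S sol.y i k * (ENNReal.ofReal x) ^ k := by
    intro x hx hxx
    rw [← ofReal_eval sol hx.le (hmono x hx hxx) i, ← eval_eq_bcoef sol hx.le (hmono x hx hxx) i]
  have hfa : (∑' k, ENNReal.ofReal (sol.y i k) * (ENNReal.ofReal x0) ^ k) ≠ ⊤ := by
    rw [← ofReal_eval sol hx0.le hx0rad i]
    exact ENNReal.ofReal_ne_top
  have hfb : (∑' k, bcoef S sol.y i k * (ENNReal.ofReal x0) ^ k) ≠ ⊤ := by
    rw [← eval_eq_bcoef sol hx0.le hx0rad i]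
    exact ENNReal.ofReal_ne_top
  exact congrFun (Aux18.enn_coeff_unique (fun k => ENNReal.ofReal (sol.y i k))
    (bcoef S sol.y i) x0 hx0 hfa hfb heq) n

/-! ### Support combinatorics -/

/-- Slots of a multi-index. -/
abbrev Slots (d : Fin (m + 1) → ℕ) : Type := Σ j : Fin m, Fin (d j.succ)

lemma y_ne_zero_of_decomp {S : PosSystem m} (sol : GFSol S) {i : Fin m}
    {d : Fin (m + 1) → ℕ} (hc : S.c i d ≠ 0) (G : Slots d → ℕ)
    (hG : ∀ s : Slots d, sol.y s.1 (G s) ≠ 0) :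
    sol.y i (d 0 + ∑ s : Slots d, G s) ≠ 0 := by
  set g : Asg d := fun j t => G ⟨j, t⟩ with hg
  have hsum : ∑ s : Slots d, G s = ∑ j, ∑ t, g j t := by
    rw [← Finset.univ_sigma_univ, Finset.sum_sigma]
  have hawt : d 0 + ∑ s : Slots d, G s = awt d g := by rw [awt, hsum]
  rw [hawt]
  have hrec := coef_rec sol i (awt d g)
  have hpos : 0 < coefE S sol.y i ⟨d, g⟩ := by
    rw [coefE, pos_iff_ne_zero]
    refine mul_ne_zero ?_ ?_
    · exact (ENNReal.ofReal_pos.2 (lt_of_le_of_ne (S.nonneg i d) (Ne.symm hc))).ne'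
    · rw [Finset.prod_ne_zero_iff]
      intro j _
      rw [Finset.prod_ne_zero_iff]
      intro t _
      have := hG ⟨j, t⟩
      have hy := sol.nonneg j (g j t)
      exact (ENNReal.ofReal_pos.2 (lt_of_le_of_ne hy (Ne.symm (by exact this)))).ne'
  have hle : coefE S sol.y i ⟨d, g⟩ ≤ bcoef S sol.y i (awt d g) :=
    ENNReal.le_tsum (⟨⟨d, g⟩, rfl⟩ : {p : Σ d : Fin (m + 1) → ℕ, Asg d // awt p.1 p.2 = awt d g})
  intro hzero
  rw [hzero] at hrec
  simp only [ENNReal.ofReal_zero] at hrec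
  exact (lt_of_lt_of_le hpos hle).ne' hrec.symm

/-- Dependency edge extracted from the coefficients. -/
def EdgeC (S : PosSystem m) (i j : Fin m) : Prop :=
  ∃ d : Fin (m + 1) → ℕ, S.c i d ≠ 0 ∧ 1 ≤ d j.succ

lemma edge_of_dependsOn {S : PosSystem m} {i j : Fin m} (h : DependsOn S i j) : EdgeC S i j := by
  obtain ⟨x, _, _, hne⟩ := h
  by_contra hcon
  simp only [EdgeC, not_exists, not_and, not_le] at hcon
  apply hne
  show (∑' d, jacTerm S i j x d) = 0
  have : ∀ d, jacTerm S i j x d = 0 := by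
    intro d
    rcases eq_or_ne (S.c i d) 0 with h0 | h0
    · simp [jacTerm, h0]
    · have hz : d j.succ = 0 := by have := hcon d h0; omega
      simp [jacTerm, hz]
  rw [tsum_congr this, tsum_zero]

lemma eval_zero_eq {S : PosSystem m} (sol : GFSol S) (j : Fin m) : eval sol.y 0 j = sol.y j 0 := by
  rw [eval, tsum_eq_single 0 (fun n hn => by simp [zero_pow hn])]
  simp

lemma y0_eq_uIter {S : PosSystem m} (sol : GFSol S) : (fun j => sol.y j 0) = uIter S m := by
  funext j
  rw [← sol.init]
  exact (eval_zero_eq sol j).symm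

lemma edge_shift' {S : PosSystem m} (sol : GFSol S) (hwf : IsWF S)
    (hz : ∀ j, ∃ n, sol.y j n ≠ 0) {i j : Fin m} (he : EdgeC S i j) :
    ∃ D : ℕ, (∀ n, sol.y j n ≠ 0 → sol.y i (n + D) ≠ 0) ∧
      (D = 0 → 0 < jac S (vec 0 (uIter S m)) i j) := by
  obtain ⟨d, hc, hd⟩ := he
  have h0d : 0 < d j.succ := hd
  set s0 : Slots d := ⟨j, ⟨0, h0d⟩⟩ with hs0
  set base : Slots d → ℕ := fun s => if s = s0 then 0 else sVal (sol.y s.1) with hbase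
  refine ⟨d 0 + ∑ s, base s, ?_, ?_⟩
  · intro n hn
    set G : Slots d → ℕ := fun s => if s = s0 then n else sVal (sol.y s.1) with hG
    have h1 : sol.y i (d 0 + ∑ s, G s) ≠ 0 := by
      refine y_ne_zero_of_decomp sol hc G (fun s => ?_)
      rcases eq_or_ne s s0 with rfl | hs
      · simpa [hG, hs0] using hn
      · have hmem : sol.y s.1 (sVal (sol.y s.1)) ≠ 0 := Nat.sInf_mem (hz s.1)
        simpa [hG, hs] using hmem
    have h2 : d 0 + ∑ s, G s = n + (d 0 + ∑ s, base s) := by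
      have hsplit : ∀ s, G s = (if s = s0 then n else 0) + base s := by
        intro s; by_cases h : s = s0 <;> simp [hG, hbase, h]
      rw [Finset.sum_congr rfl (fun s _ => hsplit s), Finset.sum_add_distrib,
        Finset.sum_ite_eq' Finset.univ s0 (fun _ => n)]
      simp only [Finset.mem_univ, if_true]
      omega
    rwa [h2] at h1
  · intro hD0
    have hd0 : d 0 = 0 := by omega
    have hsum0 : ∑ s, base s = 0 := by omega
    have hbase0 : ∀ s : Slots d, s ≠ s0 → sVal (sol.y s.1) = 0 := by
      intro s hs
      have := Finset.sum_eq_zero_iff.1 hsum0 s (Finset.mem_univ s)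
      simpa [hbase, hs] using this
    have hy0pos : ∀ j' : Fin m, (∃ s : Slots d, s ≠ s0 ∧ s.1 = j') → 0 < sol.y j' 0 := by
      rintro j' ⟨s, hs, rfl⟩
      have hv := hbase0 s hs
      have hmem : sol.y s.1 (sVal (sol.y s.1)) ≠ 0 := Nat.sInf_mem (hz s.1)
      rw [hv] at hmem
      exact lt_of_le_of_ne (sol.nonneg s.1 0) (Ne.symm hmem)
    set xs : Fin (m + 1) → ℝ := vec 0 (uIter S m) with hxs
    have hxs0 : xs 0 = 0 := by rw [hxs, vec, Fin.cons_zero]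
    have hxs_succ : ∀ j' : Fin m, xs j'.succ = sol.y j' 0 := by
      intro j'
      rw [hxs, vec, Fin.cons_succ, ← y0_eq_uIter sol]
    have hxs_nonneg : ∀ k, 0 ≤ xs k := by
      intro k
      refine Fin.cases ?_ ?_ k
      · rw [hxs0]
      · intro j'; rw [hxs_succ j']; exact sol.nonneg j' 0
    have hterm_pos : 0 < jacTerm S i j xs d := by
      rw [jacTerm]
      refine mul_pos (mul_pos (lt_of_le_of_ne (S.nonneg i d) (Ne.symm hc)) ?_) ?_
      · exact_mod_cast h0d
      · refine Finset.prod_pos (fun k _ => ?_)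
        refine Fin.cases ?_ ?_ k
        · rw [if_neg (Ne.symm (Fin.succ_ne_zero j)), hxs0, hd0, pow_zero]
          exact one_pos
        · intro j''
          by_cases hjj : j'' = j
          · subst hjj
            rw [if_pos rfl, hxs_succ]
            rcases Nat.eq_zero_or_pos (d j''.succ - 1) with h1 | h1
            · rw [h1, pow_zero]; exact one_pos
            · have h2 : 1 < d j''.succ := by omega
              have hys : 0 < sol.y j'' 0 :=
                hy0pos j'' ⟨⟨j'', ⟨1, h2⟩⟩, by simp [hs0, Fin.ext_iff], rfl⟩
              exact pow_pos hys _
          · rw [if_neg (fun h => hjj (Fin.succ_injective m h)), hxs_succ]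
            rcases Nat.eq_zero_or_pos (d j''.succ) with h1 | h1
            · rw [h1, pow_zero]; exact one_pos
            · have hys : 0 < sol.y j'' 0 :=
                hy0pos j'' ⟨⟨j'', ⟨0, h1⟩⟩, by simp [hs0, Sigma.ext_iff, hjj], rfl⟩
              exact pow_pos hys _
    have hnn : ∀ d', 0 ≤ jacTerm S i j xs d' := by
      intro d'
      exact mul_nonneg (mul_nonneg (S.nonneg i d') (Nat.cast_nonneg _))
        (Finset.prod_nonneg fun k _ => pow_nonneg (hxs_nonneg k) _)
    have hsummable : Summable (jacTerm S i j xs) :=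
      ((hwf.2.1 i j).congr fun d' => abs_of_nonneg (hnn d'))
    have hle := Summable.le_tsum hsummable d (fun b _ => hnn b)
    exact lt_of_lt_of_le hterm_pos hle

lemma pow_entry_nonneg {N : Type*} [Fintype N] [DecidableEq N] {A : Matrix N N ℝ}
    (hA : ∀ a b, 0 ≤ A a b) : ∀ (n : ℕ) (a b : N), 0 ≤ (A ^ n) a b := by
  intro n
  induction n with
  | zero =>
    intro a b
    by_cases h : a = b <;> simp [Matrix.one_apply, h]
  | succ n ih =>
    intro a b
    rw [pow_succ, Matrix.mul_apply]
    exact Finset.sum_nonneg fun c _ => mul_nonneg (ih a c) (hA c b)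

lemma mul_entry_le {N : Type*} [Fintype N] [DecidableEq N] {B C : Matrix N N ℝ}
    (hB : ∀ a b, 0 ≤ B a b) (hC : ∀ a b, 0 ≤ C a b) (a b c : N) :
    B a b * C b c ≤ (B * C) a c := by
  rw [Matrix.mul_apply]
  exact Finset.single_le_sum (fun d _ => mul_nonneg (hB a d) (hC d c)) (Finset.mem_univ b)

lemma not_nilp {N : Type*} [Fintype N] [DecidableEq N] {A : Matrix N N ℝ}
    (hA : ∀ a b, 0 ≤ A a b) {k : ℕ} (hk : 1 ≤ k) (p : Fin (k + 1) → N)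
    (hc : p (Fin.last k) = p 0)
    (hpos : ∀ t : Fin k, 0 < A (p t.castSucc) (p t.succ)) : ¬ IsNilpotent A := by
  have hpath : ∀ t : Fin (k + 1), 0 < (A ^ (t : ℕ)) (p 0) (p t) := by
    intro t
    induction t using Fin.induction with
    | zero => simp [Matrix.one_apply_eq]
    | succ t ih =>
      have h1 : ((t.succ : Fin (k + 1)) : ℕ) = ((t.castSucc : Fin (k + 1)) : ℕ) + 1 := by simp
      rw [h1, pow_succ]
      calc (0:ℝ) < (A ^ ((t.castSucc : Fin (k+1)) : ℕ)) (p 0) (p t.castSucc) *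
            A (p t.castSucc) (p t.succ) := mul_pos ih (hpos t)
        _ ≤ _ := mul_entry_le (pow_entry_nonneg hA _) hA _ _ _
  have hkk : 0 < (A ^ k) (p 0) (p 0) := by
    have := hpath (Fin.last k)
    rwa [hc, Fin.val_last] at this
  have hiter : ∀ n : ℕ, 0 < (A ^ (k * n)) (p 0) (p 0) := by
    intro n
    induction n with
    | zero => simp [Matrix.one_apply_eq]
    | succ n ih =>
      have hkn : k * (n + 1) = k * n + k := by ring
      rw [hkn, pow_add]
      calc (0:ℝ) < (A ^ (k * n)) (p 0) (p 0) * (A ^ k) (p 0) (p 0) := mul_pos ih hkk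
        _ ≤ _ := mul_entry_le (pow_entry_nonneg hA _) (pow_entry_nonneg hA _) _ _ _
  rintro ⟨M, hM⟩
  have hle : M ≤ k * M := Nat.le_mul_of_pos_left M hk
  have hzero : A ^ (k * M) = 0 := by
    rw [← Nat.sub_add_cancel hle, pow_add, hM, mul_zero]
  have := hiter M
  rw [hzero] at this
  simp at this

lemma jac_nonneg_at0 {S : PosSystem m} (sol : GFSol S) (a b : Fin m) :
    0 ≤ jac S (vec 0 (uIter S m)) a b := by
  have hxs_nonneg : ∀ k, 0 ≤ vec 0 (uIter S m) k := by
    intro k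
    refine Fin.cases ?_ ?_ k
    · rw [vec, Fin.cons_zero]
    · intro j'
      rw [vec, Fin.cons_succ, ← y0_eq_uIter sol]
      exact sol.nonneg j' 0
  show 0 ≤ ∑' d, jacTerm S a b (vec 0 (uIter S m)) d
  refine tsum_nonneg fun d => mul_nonneg (mul_nonneg (S.nonneg a d) (Nat.cast_nonneg _))
    (Finset.prod_nonneg fun k _ => pow_nonneg (hxs_nonneg k) _)

lemma reach {S : PosSystem m} (sol : GFSol S) (hwf : IsWF S)
    (hz : ∀ j, ∃ n, sol.y j n ≠ 0) (hSC : StronglyConnected S) (i j : Fin m) :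
    ∃ D : ℕ, ∀ n, sol.y j n ≠ 0 → sol.y i (n + D) ≠ 0 := by
  obtain ⟨k, hk, p, hp0, hpl, hpe⟩ := hSC i j
  have hstep : ∀ t : Fin k, ∃ D, ∀ n, sol.y (p t.succ) n ≠ 0 →
      sol.y (p t.castSucc) (n + D) ≠ 0 := by
    intro t
    obtain ⟨D, h1, _⟩ := edge_shift' sol hwf hz (edge_of_dependsOn (hpe t))
    exact ⟨D, h1⟩
  have hmain : ∀ t : Fin (k + 1), ∃ D, ∀ n, sol.y (p t) n ≠ 0 →
      sol.y (p 0) (n + D) ≠ 0 := by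
    intro t
    induction t using Fin.induction with
    | zero => exact ⟨0, fun n h => by simpa using h⟩
    | succ t ih =>
      obtain ⟨D1, h1⟩ := ih
      obtain ⟨D2, h2⟩ := hstep t
      exact ⟨D2 + D1, fun n hn => by have := h1 _ (h2 n hn); rwa [add_assoc] at this⟩
  obtain ⟨D, hD⟩ := hmain (Fin.last k)
  rw [hpl] at hD
  rw [← hp0]
  exact ⟨D, hD⟩

lemma supp_infinite' {S : PosSystem m} (sol : GFSol S) (hirr : sol.Irreducible) (i : Fin m) :
    {n : ℕ | sol.y i n ≠ 0}.Infinite := by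
  obtain ⟨hwf, hz, hSC⟩ := hirr
  obtain ⟨k, hk, p, hp0, hpl, hpe⟩ := hSC i i
  choose D hD hD0 using fun t : Fin k => edge_shift' sol hwf hz (edge_of_dependsOn (hpe t))
  by_cases hall : ∀ t, D t = 0
  · exact absurd hwf.2.2 (not_nilp (jac_nonneg_at0 sol) hk p (hpl.trans hp0.symm)
      (fun t => hD0 t (hall t)))
  · push_neg at hall
    obtain ⟨t0, ht0⟩ := hall
    have hmain : ∀ t : Fin (k + 1), ∃ E, (∀ n, sol.y (p t) n ≠ 0 →
        sol.y (p 0) (n + E) ≠ 0) ∧ ∀ t' : Fin k, ((t'.succ : Fin (k+1)) : ℕ) ≤ (t : ℕ) →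
        D t' ≤ E := by
      intro t
      induction t using Fin.induction with
      | zero =>
        refine ⟨0, fun n h => by simpa using h, fun t' h' => ?_⟩
        simp at h'
      | succ t ih =>
        obtain ⟨E, h1, h2⟩ := ih
        refine ⟨D t + E, fun n hn => ?_, fun t' h' => ?_⟩
        · have := h1 _ (hD t n hn)
          rwa [add_assoc] at this
        · rcases eq_or_ne t' t with rfl | hne
          · exact Nat.le_add_right _ _
          · have hlt : ((t'.succ : Fin (k+1)) : ℕ) ≤ ((t.castSucc : Fin (k+1)) : ℕ) := by
              have hv : (t' : ℕ) ≠ (t : ℕ) := fun h => hne (Fin.ext h)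
              simp only [Fin.val_succ, Fin.coe_castSucc] at h' ⊢
              omega
            exact le_trans (h2 t' hlt) (Nat.le_add_left _ _)
    obtain ⟨E, hE, hbound⟩ := hmain (Fin.last k)
    have hE1 : 1 ≤ E := by
      have := hbound t0 (by simp [Fin.val_succ, Fin.val_last])
      omega
    rw [hpl] at hE
    rw [← hp0] at hE ⊢
    have hv : sol.y (p 0) (sVal (sol.y (p 0))) ≠ 0 := Nat.sInf_mem (hz (p 0))
    have hmem : ∀ c : ℕ, sol.y (p 0) (sVal (sol.y (p 0)) + c * E) ≠ 0 := by
      intro c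
      induction c with
      | zero => simpa using hv
      | succ c ih =>
        have := hE _ ih
        have harith : sVal (sol.y (p 0)) + c * E + E = sVal (sol.y (p 0)) + (c + 1) * E := by ring
        rwa [harith] at this
    refine Set.infinite_of_injective_forall_mem (f := fun c : ℕ => sVal (sol.y (p 0)) + c * E)
      ?_ (fun c => hmem c)
    intro a b hab
    simp only at hab
    have : a * E = b * E := by omega
    exact Nat.eq_of_mul_eq_mul_right hE1 this

lemma exists_hasPeriod (a : ℕ → ℝ) : ∃ q : ℕ, HasPeriod a q := by
  set Dset : Set ℤ := {z | ∃ n n' : ℕ, a n ≠ 0 ∧ a n' ≠ 0 ∧ z = (n : ℤ) - n'} with hDset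
  obtain ⟨g, hg⟩ := Int.subgroup_cyclic (AddSubgroup.closure Dset)
  refine ⟨g.natAbs, ?_, ?_⟩
  · intro n n' hn hn'
    have hmem : ((n : ℤ) - n') ∈ AddSubgroup.closure Dset :=
      AddSubgroup.subset_closure ⟨n, n', hn, hn', rfl⟩
    rw [hg, AddSubgroup.mem_closure_singleton] at hmem
    obtain ⟨z, hz⟩ := hmem
    rw [Int.natAbs_dvd]
    exact ⟨z, by rw [← hz, zsmul_eq_mul, Int.cast_id, mul_comm]⟩
  · intro q' hq'
    have hsub : Dset ⊆ (AddSubgroup.zmultiples (q' : ℤ) : Set ℤ) := by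
      rintro z ⟨n, n', hn, hn', rfl⟩
      obtain ⟨c, hc⟩ := hq' n n' hn hn'
      refine ⟨c, ?_⟩
      show c • (q' : ℤ) = _
      rw [hc, zsmul_eq_mul, Int.cast_id, mul_comm]
    have hle : AddSubgroup.closure Dset ≤ AddSubgroup.zmultiples (q' : ℤ) :=
      (AddSubgroup.closure_le _).2 hsub
    have hgmem : g ∈ AddSubgroup.closure Dset := by
      rw [hg, AddSubgroup.mem_closure_singleton]
      exact ⟨1, one_smul _ _⟩
    obtain ⟨c, hc⟩ := AddSubgroup.mem_zmultiples_iff.1 (hle hgmem)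
    have : (q' : ℤ) ∣ g := ⟨c, by rw [← hc, zsmul_eq_mul, Int.cast_id, mul_comm]⟩
    have h2 := Int.natAbs_dvd_natAbs.2 this
    simpa using h2

lemma double_step {S : PosSystem m} (sol : GFSol S) (hz : ∀ j, ∃ n, sol.y j n ≠ 0)
    (hnl : ¬ IsLinear S) :
    ∃ (l a b : Fin m) (D : ℕ), ∀ n1 n2 : ℕ, sol.y a n1 ≠ 0 → sol.y b n2 ≠ 0 →
      sol.y l (n1 + n2 + D) ≠ 0 := by
  simp only [IsLinear, not_forall] at hnl
  obtain ⟨l, d, hcard, hc⟩ := hnl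
  have hcard2 : 2 ≤ Fintype.card (Slots d) := by
    rw [Fintype.card_sigma]
    simpa using hcard
  obtain ⟨s1, s2, hs12⟩ := Fintype.exists_pair_of_one_lt_card (α := Slots d) (by omega)
  set base : Slots d → ℕ :=
    fun s => if s = s1 then 0 else if s = s2 then 0 else sVal (sol.y s.1) with hbase
  refine ⟨l, s1.1, s2.1, d 0 + ∑ s, base s, fun n1 n2 hn1 hn2 => ?_⟩
  set G : Slots d → ℕ :=
    fun s => if s = s1 then n1 else if s = s2 then n2 else sVal (sol.y s.1) with hG
  have h1 : sol.y l (d 0 + ∑ s, G s) ≠ 0 := by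
    refine y_ne_zero_of_decomp sol hc G (fun s => ?_)
    rcases eq_or_ne s s1 with rfl | hne1
    · simpa [hG] using hn1
    · rcases eq_or_ne s s2 with rfl | hne2
      · simpa [hG, hne1] using hn2
      · have hmem : sol.y s.1 (sVal (sol.y s.1)) ≠ 0 := Nat.sInf_mem (hz s.1)
        simpa [hG, hne1, hne2] using hmem
  have h2 : d 0 + ∑ s, G s = n1 + n2 + (d 0 + ∑ s, base s) := by
    have hsplit : ∀ s, G s = (if s = s1 then n1 else 0) + (if s = s2 then n2 else 0) + base s := by
      intro s
      rcases eq_or_ne s s1 with rfl | h1'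
      · have : s ≠ s2 := hs12
        simp [hG, hbase, this]
      · rcases eq_or_ne s s2 with rfl | h2'
        · simp [hG, hbase, h1']
        · simp [hG, hbase, h1', h2']
    rw [Finset.sum_congr rfl (fun s _ => hsplit s), Finset.sum_add_distrib,
      Finset.sum_add_distrib, Finset.sum_ite_eq' Finset.univ s1 (fun _ => n1),
      Finset.sum_ite_eq' Finset.univ s2 (fun _ => n2)]
    simp only [Finset.mem_univ, if_true]
    omega
  rwa [h2] at h1

lemma nsmul_mem_B0 {B : Set ℕ} (hadd : ∀ a ∈ B, ∀ b ∈ B, a + b ∈ B) :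
    ∀ (c x : ℕ), x ∈ insert 0 B → c * x ∈ insert 0 B := by
  intro c
  induction c with
  | zero => intro x _; simp
  | succ c ih =>
    intro x hx
    have hc := ih x hx
    rcases hc with hc | hc
    · simpa [Nat.succ_mul, hc] using hx
    · rcases hx with hx | hx
      · simp [hx]
      · exact Or.inr (by simpa [Nat.succ_mul] using hadd _ hc _ hx)

lemma add_closed_cofinite (B : Set ℕ) (hne : B.Nonempty)
    (hadd : ∀ a ∈ B, ∀ b ∈ B, a + b ∈ B)
    (hgcd : ∀ g : ℕ, (∀ a ∈ B, ∀ b ∈ B, (g : ℤ) ∣ (a : ℤ) - b) → g = 1) :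
    ∃ N, ∀ n, N ≤ n → n ∈ B := by
  set H := AddSubgroup.closure ((fun n : ℕ => (n : ℤ)) '' B) with hH
  obtain ⟨g, hg⟩ := Int.subgroup_cyclic H
  have hdvd : ∀ x ∈ B, g ∣ (x : ℤ) := by
    intro x hx
    have : (x : ℤ) ∈ H := AddSubgroup.subset_closure ⟨x, hx, rfl⟩
    rw [hg, AddSubgroup.mem_closure_singleton] at this
    obtain ⟨z, hz⟩ := this
    exact ⟨z, by rw [← hz, zsmul_eq_mul, Int.cast_id, mul_comm]⟩
  have hg1 : g.natAbs = 1 := by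
    refine hgcd g.natAbs (fun a ha b hb => ?_)
    rw [Int.natAbs_dvd]
    exact dvd_sub (hdvd a ha) (hdvd b hb)
  have h1H : (1 : ℤ) ∈ H := by
    rw [hg, AddSubgroup.mem_closure_singleton]
    rcases Int.natAbs_eq g with h | h
    · exact ⟨1, by rw [h, hg1]; simp⟩
    · exact ⟨-1, by rw [h, hg1]; simp⟩
  have hrep : ∀ z ∈ H, ∃ u ∈ insert 0 B, ∃ v ∈ insert 0 B, (u : ℤ) - v = z := by
    intro z hz
    induction hz using AddSubgroup.closure_induction with
    | mem x hx =>
      obtain ⟨u, hu, rfl⟩ := hx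
      exact ⟨u, Or.inr hu, 0, Or.inl rfl, by simp⟩
    | zero => exact ⟨0, Or.inl rfl, 0, Or.inl rfl, by simp⟩
    | add x y hx hy ihx ihy =>
      obtain ⟨u1, hu1, v1, hv1, h1⟩ := ihx
      obtain ⟨u2, hu2, v2, hv2, h2⟩ := ihy
      have hB0 : ∀ a ∈ insert 0 B, ∀ b ∈ insert 0 B, a + b ∈ insert 0 B := by
        rintro a (rfl | ha) b (rfl | hb)
        · simp
        · simpa using Or.inr hb
        · simpa using Or.inr ha
        · exact Or.inr (hadd a ha b hb)
      exact ⟨u1 + u2, hB0 _ hu1 _ hu2, v1 + v2, hB0 _ hv1 _ hv2, by push_cast; omega⟩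
    | neg x hx ihx =>
      obtain ⟨u, hu, v, hv, h⟩ := ihx
      exact ⟨v, hv, u, hu, by omega⟩
  obtain ⟨u, hu, v, hv, huv⟩ := hrep 1 h1H
  have huv' : u = v + 1 := by omega
  rcases eq_or_ne v 0 with rfl | hv0
  · have h1B : (1 : ℕ) ∈ B := by
      rcases hu with h | h
      · omega
      · rwa [huv'] at h
    refine ⟨1, fun n hn => ?_⟩
    induction n with
    | zero => omega
    | succ n ih =>
      rcases Nat.eq_zero_or_pos n with rfl | hn'
      · simpa using h1B
      · exact hadd n (ih hn') 1 h1B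
  · refine ⟨v * v, fun n hn => ?_⟩
    set q := n / v with hq
    set r := n % v with hr
    have hvpos : 0 < v := by omega
    have hnqr : v * q + r = n := Nat.div_add_mod n v
    have hrv : r < v := Nat.mod_lt _ hvpos
    have hqv : v ≤ q := by
      by_contra hcon
      push_neg at hcon
      have : v * q + r < v * v := by
        calc v * q + r < v * q + v := by omega
          _ = v * (q + 1) := by ring
          _ ≤ v * v := Nat.mul_le_mul_left v (by omega)
      omega
    have e1 : (q - r) * v = q * v - r * v := Nat.sub_mul q r v
    have e2 : r * v ≤ q * v := Nat.mul_le_mul_right v (by omega)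
    have e3 : r * u = r * v + r := by rw [huv']; ring
    have e4 : v * q = q * v := by ring
    have hv0' : v ∈ insert 0 B := hv
    have hu0 : u ∈ insert 0 B := hu
    have hm1 := nsmul_mem_B0 hadd (q - r) v hv0'
    have hm2 := nsmul_mem_B0 hadd r u hu0
    have hB0 : ∀ a ∈ insert 0 B, ∀ b ∈ insert 0 B, a + b ∈ insert 0 B := by
      rintro a (rfl | ha) b (rfl | hb)
      · simp
      · simpa using Or.inr hb
      · simpa using Or.inr ha
      · exact Or.inr (hadd a ha b hb)
    have hnmem : n ∈ insert 0 B := by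
      have hsum := hB0 _ hm1 _ hm2
      have hid : (q - r) * v + r * u = n := by omega
      rwa [hid] at hsum
    rcases hnmem with h | h
    · exfalso
      have : 0 < v * v := Nat.mul_pos hvpos hvpos
      omega
    · exact h

/-- For an irreducible system, each coordinate of the solution has infinite
support and all coordinates have the same period `q`; for nonlinear systems the support of
`Y_i` lies in `val(Y_i) + qℕ` with only finitely many missing terms. -/
theorem statement18 (m : ℕ) (hm : 1 ≤ m) (S : PosSystem m) (sol : GFSol S)
    (hirr : sol.Irreducible) :
    (∀ i, {n : ℕ | sol.y i n ≠ 0}.Infinite) ∧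
      ∃ q : ℕ, (∀ i, HasPeriod (sol.y i) q) ∧
        (¬ IsLinear S →
          ∀ i, (∀ n, sol.y i n ≠ 0 → ∃ k : ℕ, n = sVal (sol.y i) + q * k) ∧
            {k : ℕ | sol.y i (sVal (sol.y i) + q * k) = 0}.Finite) := by
  obtain ⟨hwf, hz, hSC⟩ := hirr
  have hz' : ∀ j, ∃ n, sol.y j n ≠ 0 := hz
  have hinf : ∀ i, {n : ℕ | sol.y i n ≠ 0}.Infinite := supp_infinite' sol ⟨hwf, hz, hSC⟩
  refine ⟨hinf, ?_⟩
  set i0 : Fin m := ⟨0, hm⟩ with hi0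
  obtain ⟨q, hq⟩ := exists_hasPeriod (sol.y i0)
  have hper : ∀ i, HasPeriod (sol.y i) q := by
    intro i
    obtain ⟨D1, hD1⟩ := reach sol hwf hz' hSC i0 i
    obtain ⟨D2, hD2⟩ := reach sol hwf hz' hSC i i0
    constructor
    · intro n n' hn hn'
      obtain ⟨c, hc⟩ := hq.1 (n + D1) (n' + D1) (hD1 n hn) (hD1 n' hn')
      exact ⟨c, by push_cast at hc ⊢; omega⟩
    · intro q' hq'
      refine hq.2 q' (fun n n' hn hn' => ?_)
      obtain ⟨c, hc⟩ := hq' (n + D2) (n' + D2) (hD2 n hn) (hD2 n' hn')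
      exact ⟨c, by push_cast at hc ⊢; omega⟩
  refine ⟨q, hper, ?_⟩
  intro hnl i
  have hq1 : 1 ≤ q := by
    by_contra h
    have hq0 : q = 0 := by omega
    have hsub : {n : ℕ | sol.y i n ≠ 0}.Subsingleton := by
      intro n hn n' hn'
      have hd := (hper i).1 n n' hn hn'
      rw [hq0] at hd
      have := zero_dvd_iff.1 (by exact_mod_cast hd)
      omega
    exact absurd hsub.finite (hinf i)
  have hvmem : sol.y i (sVal (sol.y i)) ≠ 0 := Nat.sInf_mem (hz' i)
  set v := sVal (sol.y i) with hv
  have hrep : ∀ n, sol.y i n ≠ 0 → ∃ k : ℕ, n = v + q * k := by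
    intro n hn
    obtain ⟨z, hzz⟩ := (hper i).1 n v hn hvmem
    have hle : v ≤ n := Nat.sInf_le hn
    have hz0 : 0 ≤ z := by
      rcases le_or_gt 0 z with h | h
      · exact h
      · exfalso
        have hlt : (q : ℤ) * z < 0 := mul_neg_of_pos_of_neg (by exact_mod_cast hq1) h
        omega
    refine ⟨z.toNat, ?_⟩
    have htn : (z.toNat : ℤ) = z := Int.toNat_of_nonneg hz0
    have h2 : (n : ℤ) - v = (q : ℤ) * (z.toNat : ℤ) := by rw [htn]; exact hzz
    have h3 : (n : ℤ) = (v : ℤ) + ((q * z.toNat : ℕ) : ℤ) := by push_cast; omega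
    exact_mod_cast h3
  refine ⟨hrep, ?_⟩
  obtain ⟨l, a, b, D, hDstep⟩ := double_step sol hz' hnl
  obtain ⟨Da, hDa⟩ := reach sol hwf hz' hSC a i
  obtain ⟨Db, hDb⟩ := reach sol hwf hz' hSC b i
  obtain ⟨Dl, hDl⟩ := reach sol hwf hz' hSC i l
  set C : ℕ := Da + Db + D + Dl with hC
  have hclose : ∀ n1 n2, sol.y i n1 ≠ 0 → sol.y i n2 ≠ 0 → sol.y i (n1 + n2 + C) ≠ 0 := by
    intro n1 n2 h1 h2
    have h3 := hDstep (n1 + Da) (n2 + Db) (hDa n1 h1) (hDb n2 h2)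
    have h4 := hDl _ h3
    have harith : n1 + Da + (n2 + Db) + D + Dl = n1 + n2 + C := by rw [hC]; ring
    rwa [harith] at h4
  have hvC : ∃ cn : ℕ, q * cn = v + C := by
    have hmem2 : sol.y i (v + v + C) ≠ 0 := hclose v v hvmem hvmem
    obtain ⟨k, hk⟩ := hrep (v + v + C) hmem2
    exact ⟨k, by omega⟩
  obtain ⟨cn, hqcn⟩ := hvC
  set T : Set ℕ := {k | sol.y i (v + q * k) ≠ 0} with hT
  set B : Set ℕ := (fun k => k + cn) '' T with hB
  have hT0 : (0 : ℕ) ∈ T := by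
    simp only [hT, Set.mem_setOf_eq, Nat.mul_zero, Nat.add_zero]
    exact hvmem
  have hTadd : ∀ k1 ∈ T, ∀ k2 ∈ T, k1 + k2 + cn ∈ T := by
    intro k1 h1 k2 h2
    have h3 := hclose (v + q * k1) (v + q * k2) h1 h2
    have harith : v + q * k1 + (v + q * k2) + C = v + q * (k1 + k2 + cn) := by
      have e : q * (k1 + k2 + cn) = q * k1 + q * k2 + q * cn := by ring
      omega
    rwa [harith] at h3
  have hBadd : ∀ x ∈ B, ∀ y ∈ B, x + y ∈ B := by
    rintro x ⟨k1, h1, rfl⟩ y ⟨k2, h2, rfl⟩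
    exact ⟨k1 + k2 + cn, hTadd k1 h1 k2 h2, by ring⟩
  have hBne : B.Nonempty := ⟨0 + cn, 0, hT0, rfl⟩
  have hBgcd : ∀ g : ℕ, (∀ x ∈ B, ∀ y ∈ B, (g : ℤ) ∣ (x : ℤ) - y) → g = 1 := by
    intro g hg
    have hdiv : ∀ n n', sol.y i n ≠ 0 → sol.y i n' ≠ 0 →
        ((q * g : ℕ) : ℤ) ∣ (n : ℤ) - n' := by
      intro n n' hn hn'
      obtain ⟨k, hk⟩ := hrep n hn
      obtain ⟨k', hk'⟩ := hrep n' hn'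
      have hkT : k ∈ T := by rw [hT, Set.mem_setOf_eq, ← hk]; exact hn
      have hk'T : k' ∈ T := by rw [hT, Set.mem_setOf_eq, ← hk']; exact hn'
      have hgk : (g : ℤ) ∣ (k : ℤ) - k' := by
        have := hg (k + cn) ⟨k, hkT, rfl⟩ (k' + cn) ⟨k', hk'T, rfl⟩
        obtain ⟨c, hc⟩ := this
        exact ⟨c, by push_cast at hc ⊢; omega⟩
      obtain ⟨c, hc⟩ := hgk
      refine ⟨c, ?_⟩
      have hnn' : (n : ℤ) - n' = (q : ℤ) * ((k : ℤ) - k') := by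
        rw [hk, hk']; push_cast; ring
      rw [hnn', hc]
      push_cast
      ring
    have hqq := (hper i).2 (q * g) hdiv
    have := (Nat.mul_dvd_mul_iff_left (show 0 < q by omega)).1
      (show q * g ∣ q * 1 by rw [Nat.mul_one]; exact hqq)
    exact Nat.dvd_one.1 this
  obtain ⟨N, hN⟩ := add_closed_cofinite B hBne hBadd hBgcd
  refine Set.Finite.subset (Set.finite_Iio N) ?_
  intro k hk
  simp only [Set.mem_setOf_eq] at hk
  by_contra hcon
  simp only [Set.mem_Iio, not_lt] at hcon
  have hkB : k + cn ∈ B := hN (k + cn) (by omega)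
  obtain ⟨k', hk'T, he⟩ := hkB
  have he' : k' + cn = k + cn := he
  have hkk : k' = k := by omega
  rw [hkk] at hk'T
  rw [hT, Set.mem_setOf_eq] at hk'T
  exact hk'T hk


end AnalyticComb
end

section
/- Let k ≥ 1 and let F be given by nonnegative real coefficients c(d) ≥ 0 over multi-indices d ∈ ℕ^{k+1}, with F(x) := Σ_d c(d)·x_0^{d_0}⋯x_k^{d_k} wherever this converges absolutely; assume F is not identically zero and, for each i ∈ {1,…,k}, the termwise partial derivative ∂F/∂x_i is not identically zero. Let φ_1,…,φ_k be nonzero real power series with nonnegative coefficients and positive radii of convergence, and suppose there is s > 0 such that the series defining g(x) := F(x, φ_1(x),…,φ_k(x)) converges absolutely for all x ∈ [0,s). Then g is the restriction to [0,s) of a function analytic on a neighborhood of 0 with nonnegative Taylor coefficients at 0, g is not identically zero, and if q denotes the period of the Taylor series of g at 0, then for each i ∈ {1,…,k}, q divides the period of φ_i. -/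
open scoped ENNReal NNReal Topology
open Filter

namespace AnalyticComb

variable {m : ℕ}

section Statement19Aux

universe u

private lemma tsum_pi_prod : ∀ {n : ℕ} {α : Fin n → Type u} (F : ∀ i, α i → ℝ≥0∞),
    (∏ i, ∑' y : α i, F i y) = ∑' e : (∀ i, α i), ∏ i, F i (e i) := by
  intro n
  induction n with
  | zero =>
    intro α F
    simp only [Finset.univ_eq_empty, Finset.prod_empty]
    rw [tsum_eq_single (fun i => i.elim0) (fun b hb => absurd (Subsingleton.elim b _) hb)]
  | succ n ih =>
    intro α F
    rw [Fin.prod_univ_succ, ih (fun i => F i.succ), ← ENNReal.tsum_mul_right]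
    calc ∑' (y : α 0), F 0 y * ∑' (e : ∀ i : Fin n, α i.succ), ∏ i, F i.succ (e i)
        = ∑' (y : α 0) (e : ∀ i : Fin n, α i.succ), F 0 y * ∏ i, F i.succ (e i) := by
          simp_rw [ENNReal.tsum_mul_left]
      _ = ∑' (p : α 0 × ∀ i : Fin n, α i.succ), F 0 p.1 * ∏ i, F i.succ (p.2 i) :=
          ENNReal.tsum_prod.symm
      _ = ∑' (p : α 0 × ∀ i : Fin n, α i.succ), ∏ i, F i ((Fin.consEquiv α) p i) := by
          refine tsum_congr fun p => ?_
          rw [Fin.prod_univ_succ]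
          simp [Fin.consEquiv]
      _ = ∑' (e : ∀ i, α i), ∏ i, F i (e i) :=
          Equiv.tsum_eq (Fin.consEquiv α) (fun e => ∏ i, F i (e i))

private lemma tsum_pow_eq (f : ℕ → ℝ≥0∞) (p : ℕ) :
    (∑' n, f n) ^ p = ∑' e : Fin p → ℕ, ∏ t, f (e t) := by
  rw [← tsum_pi_prod (α := fun _ : Fin p => ℕ) (fun _ m => f m)]
  simp

/-- Index type for the expansion of the composed series. -/
abbrev Jdx (k : ℕ) : Type := Σ d : (Fin (k + 1) → ℕ), ∀ i : Fin k, Fin (d i.succ) → ℕ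

/-- Weight of an index. -/
noncomputable def Wgt (k : ℕ) (c : (Fin (k + 1) → ℕ) → ℝ) (φ : Fin k → ℕ → ℝ) :
    Jdx k → ℝ≥0∞ :=
  fun j => ENNReal.ofReal (c j.1) * ∏ i, ∏ t, ENNReal.ofReal (φ i (j.2 i t))

/-- Degree of an index. -/
def degJ (k : ℕ) : Jdx k → ℕ := fun j => j.1 0 + ∑ i, ∑ t, j.2 i t

/-- Taylor coefficients (in `ℝ≥0∞`) of the composition. -/
noncomputable def Acoef (k : ℕ) (c : (Fin (k + 1) → ℕ) → ℝ) (φ : Fin k → ℕ → ℝ) :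
    ℕ → ℝ≥0∞ :=
  fun n => ∑' j : Jdx k, if degJ k j = n then Wgt k c φ j else 0

private lemma keyJ (k : ℕ) (c : (Fin (k + 1) → ℕ) → ℝ) (φ : Fin k → ℕ → ℝ) (X : ℝ≥0∞) :
    (∑' d : Fin (k + 1) → ℕ, ENNReal.ofReal (c d) * X ^ (d 0) *
      ∏ i, (∑' n, ENNReal.ofReal (φ i n) * X ^ n) ^ (d i.succ))
      = ∑' j : Jdx k, Wgt k c φ j * X ^ (degJ k j) := by
  rw [ENNReal.tsum_sigma' (fun j => Wgt k c φ j * X ^ (degJ k j))]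
  refine tsum_congr fun d => ?_
  have h1 : ∀ i : Fin k, (∑' n, ENNReal.ofReal (φ i n) * X ^ n) ^ (d i.succ)
      = ∑' e : Fin (d i.succ) → ℕ, ∏ t, ENNReal.ofReal (φ i (e t)) * X ^ (e t) :=
    fun i => tsum_pow_eq _ _
  calc ENNReal.ofReal (c d) * X ^ (d 0) *
        ∏ i, (∑' n, ENNReal.ofReal (φ i n) * X ^ n) ^ (d i.succ)
      = ENNReal.ofReal (c d) * X ^ (d 0) *
        ∑' e : (∀ i : Fin k, Fin (d i.succ) → ℕ), ∏ i, ∏ t,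
          ENNReal.ofReal (φ i (e i t)) * X ^ (e i t) := by
        rw [← tsum_pi_prod (α := fun i : Fin k => Fin (d i.succ) → ℕ)
          (fun i e => ∏ t, ENNReal.ofReal (φ i (e t)) * X ^ (e t))]
        exact congrArg _ (Finset.prod_congr rfl fun i _ => h1 i)
    _ = ∑' e : (∀ i : Fin k, Fin (d i.succ) → ℕ),
          Wgt k c φ ⟨d, e⟩ * X ^ (degJ k ⟨d, e⟩) := by
        rw [← ENNReal.tsum_mul_left]
        refine tsum_congr fun e => ?_
        simp only [Wgt, degJ]
        rw [Finset.prod_congr rfl (fun i _ => Finset.prod_mul_distrib)]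
        rw [Finset.prod_mul_distrib]
        have h2 : (∏ i, ∏ t, X ^ (e i t)) = X ^ (∑ i, ∑ t, (e i t)) := by
          simp_rw [Finset.prod_pow_eq_pow_sum]
        rw [h2, pow_add]
        ring
    _ = _ := rfl

private lemma keyE (k : ℕ) (c : (Fin (k + 1) → ℕ) → ℝ) (φ : Fin k → ℕ → ℝ) (X : ℝ≥0∞) :
    (∑' d : Fin (k + 1) → ℕ, ENNReal.ofReal (c d) * X ^ (d 0) *
      ∏ i, (∑' n, ENNReal.ofReal (φ i n) * X ^ n) ^ (d i.succ))
      = ∑' n, Acoef k c φ n * X ^ n := by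
  rw [keyJ]
  calc ∑' j : Jdx k, Wgt k c φ j * X ^ (degJ k j)
      = ∑' (j : Jdx k) (n : ℕ), (if degJ k j = n then Wgt k c φ j else 0) * X ^ n := by
        refine tsum_congr fun j => ?_
        rw [tsum_eq_single (degJ k j)]
        · simp
        · intro n hn
          simp [Ne.symm hn]
    _ = ∑' (n : ℕ) (j : Jdx k), (if degJ k j = n then Wgt k c φ j else 0) * X ^ n :=
        ENNReal.tsum_comm
    _ = ∑' n, Acoef k c φ n * X ^ n := by
        refine tsum_congr fun n => ?_
        rw [Acoef, ENNReal.tsum_mul_right]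

private lemma bridge (k : ℕ) (c : (Fin (k + 1) → ℕ) → ℝ) (hc : ∀ d, 0 ≤ c d)
    (φ : Fin k → ℕ → ℝ) (hφ0 : ∀ i n, 0 ≤ φ i n) (x : ℝ) (hx : 0 ≤ x)
    (hφs : ∀ i, Summable fun n => φ i n * x ^ n)
    (hgs : Summable fun d : Fin (k + 1) → ℕ =>
      c d * x ^ d 0 * ∏ i : Fin k, (∑' n, φ i n * x ^ n) ^ d i.succ) :
    ENNReal.ofReal (∑' d : Fin (k + 1) → ℕ,
        c d * x ^ d 0 * ∏ i : Fin k, (∑' n, φ i n * x ^ n) ^ d i.succ)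
      = ∑' d : Fin (k + 1) → ℕ, ENNReal.ofReal (c d) * (ENNReal.ofReal x) ^ d 0 *
          ∏ i : Fin k, (∑' n, ENNReal.ofReal (φ i n) * (ENNReal.ofReal x) ^ n) ^ d i.succ := by
  have hφx : ∀ i, 0 ≤ ∑' n, φ i n * x ^ n := fun i =>
    tsum_nonneg fun n => mul_nonneg (hφ0 i n) (pow_nonneg hx n)
  have hofφ : ∀ i, ENNReal.ofReal (∑' n, φ i n * x ^ n)
      = ∑' n, ENNReal.ofReal (φ i n) * (ENNReal.ofReal x) ^ n := by
    intro i
    rw [ENNReal.ofReal_tsum_of_nonneg (fun n => mul_nonneg (hφ0 i n) (pow_nonneg hx n)) (hφs i)]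
    exact tsum_congr fun n => by rw [ENNReal.ofReal_mul (hφ0 i n), ENNReal.ofReal_pow hx]
  have hterm : ∀ d : Fin (k + 1) → ℕ,
      0 ≤ c d * x ^ d 0 * ∏ i : Fin k, (∑' n, φ i n * x ^ n) ^ d i.succ := fun d =>
    mul_nonneg (mul_nonneg (hc d) (pow_nonneg hx _))
      (Finset.prod_nonneg fun i _ => pow_nonneg (hφx i) _)
  rw [ENNReal.ofReal_tsum_of_nonneg hterm hgs]
  refine tsum_congr fun d => ?_
  rw [ENNReal.ofReal_mul (mul_nonneg (hc d) (pow_nonneg hx _)),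
    ENNReal.ofReal_mul (hc d), ENNReal.ofReal_pow hx,
    ENNReal.ofReal_prod_of_nonneg (fun i _ => pow_nonneg (hφx i) _)]
  refine congrArg _ (Finset.prod_congr rfl fun i _ => ?_)
  rw [ENNReal.ofReal_pow (hφx i), hofφ]

private lemma ofScalars_coeff (a : ℕ → ℝ) (n : ℕ) :
    (FormalMultilinearSeries.ofScalars ℝ a).coeff n = a n := by
  show (FormalMultilinearSeries.ofScalars ℝ a) n 1 = a n
  simp [FormalMultilinearSeries.ofScalars, List.prod_ofFn]

private lemma hasFPS (a : ℕ → ℝ) (r M : ℝ) (hr : 0 < r) (hM : ∀ n, |a n| * r ^ n ≤ M) :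
    HasFPowerSeriesOnBall (fun y => ∑' n, a n * y ^ n)
      (FormalMultilinearSeries.ofScalars ℝ a) 0 (ENNReal.ofReal r) := by
  have hsum : ∀ y : ℝ, |y| < r → Summable fun n => a n * y ^ n := by
    intro y hy
    have h0 : 0 ≤ |y| / r := div_nonneg (abs_nonneg y) hr.le
    refine Summable.of_norm_bounded
      ((summable_geometric_of_lt_one h0 (by rwa [div_lt_one hr])).mul_left M) fun n => ?_
    rw [Real.norm_eq_abs, abs_mul, abs_pow]
    calc |a n| * |y| ^ n = (|a n| * r ^ n) * (|y| / r) ^ n := by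
          rw [div_pow, mul_assoc, mul_div_assoc']
          rw [mul_comm (r ^ n) (|y| ^ n), mul_div_assoc,
            div_self (pow_ne_zero n hr.ne'), mul_one]
      _ ≤ M * (|y| / r) ^ n := mul_le_mul_of_nonneg_right (hM n) (pow_nonneg h0 n)
  constructor
  · show (r.toNNReal : ℝ≥0∞) ≤ _
    refine FormalMultilinearSeries.le_radius_of_bound _ M fun n => ?_
    rw [FormalMultilinearSeries.ofScalars_norm, Real.coe_toNNReal _ hr.le]
    simpa using hM n
  · simpa using ENNReal.ofReal_pos.2 hr
  · intro y hy
    have hy' : |y| < r := by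
      simpa [edist_dist, Real.dist_eq, ENNReal.ofReal_lt_ofReal_iff hr] using hy
    have := (hsum y hy').hasSum
    simpa [ofScalars_coeff, mul_comm] using this

private lemma taylor_coeff (a : ℕ → ℝ) (r M : ℝ) (hr : 0 < r)
    (hM : ∀ n, |a n| * r ^ n ≤ M) (n : ℕ) :
    iteratedDeriv n (fun y => ∑' n, a n * y ^ n) 0 = n.factorial * a n := by
  have h := (hasFPS a r M hr hM).factorial_smul (1 : ℝ) n
  rw [iteratedDeriv_eq_iteratedFDeriv, ← h, FormalMultilinearSeries.ofScalars_apply_eq]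
  simp [smul_eq_mul]

private lemma sum_if_zero (p : ℕ) (hp : 0 < p) (m c : ℕ) :
    (∑ t : Fin p, if (t : ℕ) = 0 then m else c) = m + (p - 1) * c := by
  obtain ⟨p', rfl⟩ := Nat.exists_eq_succ_of_ne_zero hp.ne'
  rw [Fin.sum_univ_succ]
  simp [Fin.val_succ]

end Statement19Aux

/-- Composition and periods: if `g(x) = F(x, φ₁(x), …, φ_k(x))` with `F`
a nonzero positive series depending on each variable, then `g` extends analytically near `0`
with nonnegative Taylor coefficients, is nonzero, and its period divides each period of `φᵢ`. -/
theorem statement19 (k : ℕ) (hk : 1 ≤ k) (c : (Fin (k + 1) → ℕ) → ℝ)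
    (hc : ∀ d, 0 ≤ c d) (hF0 : ∃ d, c d ≠ 0)
    (hFi : ∀ i : Fin k, ∃ d, c d ≠ 0 ∧ 0 < d i.succ)
    (φ : Fin k → ℕ → ℝ) (hφ0 : ∀ i n, 0 ≤ φ i n) (hφne : ∀ i, ∃ n, φ i n ≠ 0)
    (hφrad : ∀ i, 0 < radius (φ i))
    (s : ℝ) (hs : 0 < s)
    (hconv : ∀ x : ℝ, 0 ≤ x → x < s →
      (∀ i, Summable fun n => φ i n * x ^ n) ∧
      Summable fun d : Fin (k + 1) → ℕ =>
        c d * x ^ d 0 * ∏ i : Fin k, (∑' n, φ i n * x ^ n) ^ d i.succ) :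
    ∃ (V : Set ℝ) (G : ℝ → ℝ), V ∈ 𝓝 (0 : ℝ) ∧
      (∀ x ∈ V, AnalyticAt ℝ G x) ∧
      (∀ x : ℝ, 0 ≤ x → x < s →
        G x = ∑' d : Fin (k + 1) → ℕ,
          c d * x ^ d 0 * ∏ i : Fin k, (∑' n, φ i n * x ^ n) ^ d i.succ) ∧
      (∀ n, 0 ≤ iteratedDeriv n G 0) ∧
      (∃ x : ℝ, 0 ≤ x ∧ x < s ∧
        (∑' d : Fin (k + 1) → ℕ,
          c d * x ^ d 0 * ∏ i : Fin k, (∑' n, φ i n * x ^ n) ^ d i.succ) ≠ 0) ∧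
      ∀ q : ℕ, HasPeriod (fun n => iteratedDeriv n G 0 / n.factorial) q →
        ∀ i : Fin k, ∀ qi : ℕ, HasPeriod (φ i) qi → q ∣ qi := by
  classical
  set g : ℝ → ℝ := fun x => ∑' d : Fin (k + 1) → ℕ,
    c d * x ^ d 0 * ∏ i : Fin k, (∑' n, φ i n * x ^ n) ^ d i.succ with hgdef
  obtain ⟨r, hr, hrs⟩ : ∃ r : ℝ, 0 < r ∧ r < s := ⟨s / 2, by positivity, by linarith⟩
  have hφsum : ∀ x : ℝ, 0 ≤ x → x < s → ∀ i, Summable fun n => φ i n * x ^ n :=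
    fun x hx hxs => (hconv x hx hxs).1
  have hgsum : ∀ x : ℝ, 0 ≤ x → x < s → Summable fun d : Fin (k + 1) → ℕ =>
      c d * x ^ d 0 * ∏ i : Fin k, (∑' n, φ i n * x ^ n) ^ d i.succ :=
    fun x hx hxs => (hconv x hx hxs).2
  have hφx : ∀ (x : ℝ), 0 ≤ x → ∀ i, 0 ≤ ∑' n, φ i n * x ^ n := fun x hx i =>
    tsum_nonneg fun n => mul_nonneg (hφ0 i n) (pow_nonneg hx n)
  have hterm0 : ∀ (x : ℝ), 0 ≤ x → ∀ d : Fin (k + 1) → ℕ,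
      0 ≤ c d * x ^ d 0 * ∏ i : Fin k, (∑' n, φ i n * x ^ n) ^ d i.succ := fun x hx d =>
    mul_nonneg (mul_nonneg (hc d) (pow_nonneg hx _))
      (Finset.prod_nonneg fun i _ => pow_nonneg (hφx x hx i) _)
  have hgnn : ∀ x, 0 ≤ x → 0 ≤ g x := fun x hx => tsum_nonneg (hterm0 x hx)
  have hE : ∀ x : ℝ, 0 ≤ x → x < s →
      ENNReal.ofReal (g x) = ∑' n, Acoef k c φ n * (ENNReal.ofReal x) ^ n := by
    intro x hx hxs
    rw [hgdef]
    rw [bridge k c hc φ hφ0 x hx (hφsum x hx hxs) (hgsum x hx hxs), keyE]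
  set A : ℕ → ℝ≥0∞ := Acoef k c φ with hAdef
  have hT : (∑' n, A n * (ENNReal.ofReal r) ^ n) ≠ ⊤ := by
    rw [← hE r hr.le hrs]; exact ENNReal.ofReal_ne_top
  have hRn : ∀ n : ℕ, (ENNReal.ofReal r) ^ n ≠ 0 := fun n =>
    pow_ne_zero n (ENNReal.ofReal_pos.2 hr).ne'
  have hAfin : ∀ n, A n ≠ ⊤ := by
    intro n h
    apply hT
    refine eq_top_iff.2 (le_trans ?_ (ENNReal.le_tsum n))
    rw [h, ENNReal.top_mul (hRn n)]
  set a : ℕ → ℝ := fun n => (A n).toReal with hadef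
  have ha0 : ∀ n, 0 ≤ a n := fun n => ENNReal.toReal_nonneg
  have hMb : ∀ n, |a n| * r ^ n ≤ (∑' n, A n * (ENNReal.ofReal r) ^ n).toReal := by
    intro n
    rw [abs_of_nonneg (ha0 n)]
    have h1 : A n * (ENNReal.ofReal r) ^ n ≤ ∑' n, A n * (ENNReal.ofReal r) ^ n :=
      ENNReal.le_tsum n
    have h2 := ENNReal.toReal_mono hT h1
    rwa [ENNReal.toReal_mul, ENNReal.toReal_pow, ENNReal.toReal_ofReal hr.le] at h2
  set h : ℝ → ℝ := fun y => ∑' n, a n * y ^ n with hhdef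
  have hFPS : HasFPowerSeriesOnBall h (FormalMultilinearSeries.ofScalars ℝ a) 0
      (ENNReal.ofReal r) := hasFPS a r _ hr hMb
  have hgh : ∀ x : ℝ, 0 ≤ x → x < r → g x = h x := by
    intro x hx hxr
    have h1 : ENNReal.ofReal (g x) = ∑' n, A n * (ENNReal.ofReal x) ^ n :=
      hE x hx (hxr.trans hrs)
    have h2 : g x = (ENNReal.ofReal (g x)).toReal := (ENNReal.toReal_ofReal (hgnn x hx)).symm
    rw [h2, h1, ENNReal.tsum_toReal_eq
      (fun n => ENNReal.mul_ne_top (hAfin n) (ENNReal.pow_ne_top ENNReal.ofReal_ne_top))]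
    exact tsum_congr fun n => by
      rw [ENNReal.toReal_mul, ENNReal.toReal_pow, ENNReal.toReal_ofReal hx]
  set G : ℝ → ℝ := fun x => if 0 ≤ x then g x else h x with hGdef
  have hGball : ∀ y ∈ Metric.ball (0 : ℝ) r, G y = h y := by
    intro y hy
    rw [Metric.mem_ball, Real.dist_eq, sub_zero] at hy
    by_cases h0 : 0 ≤ y
    · rw [hGdef]
      simp only [if_pos h0]
      exact hgh y h0 (by rwa [abs_of_nonneg h0] at hy)
    · rw [hGdef]
      simp only [if_neg h0]
  have hGev : ∀ x ∈ Metric.ball (0 : ℝ) r, G =ᶠ[𝓝 x] h := fun x hx =>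
    eventually_of_mem (Metric.isOpen_ball.mem_nhds hx) hGball
  have hDeriv : ∀ n, iteratedDeriv n G 0 = n.factorial * a n := by
    intro n
    rw [(hGev 0 (Metric.mem_ball_self hr)).iteratedDeriv_eq n, hhdef,
      taylor_coeff a r _ hr hMb n]
  refine ⟨Metric.ball 0 r, G, Metric.ball_mem_nhds 0 hr, ?_, ?_, ?_, ?_, ?_⟩
  · -- analyticity
    intro x hx
    have hx2 : |x| < r := by rwa [Metric.mem_ball, Real.dist_eq, sub_zero] at hx
    have hx' : x ∈ Metric.eball (0 : ℝ) (ENNReal.ofReal r) := by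
      rw [EMetric.mem_ball, edist_dist, Real.dist_eq, sub_zero]
      exact (ENNReal.ofReal_lt_ofReal_iff hr).2 hx2
    exact (hFPS.analyticAt_of_mem hx').congr (hGev x hx).symm
  · -- value on [0, s)
    intro x hx hxs
    rw [hGdef]
    simp only [if_pos hx]
    rfl
  · -- nonneg Taylor coefficients
    intro n
    rw [hDeriv n]
    have := ha0 n
    positivity
  · -- not identically zero
    refine ⟨r, hr.le, hrs, ?_⟩
    obtain ⟨d₀, hd₀⟩ := hF0
    have hφpos : ∀ i, 0 < ∑' n, φ i n * r ^ n := by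
      intro i
      obtain ⟨ni, hni⟩ := hφne i
      have hpos : 0 < φ i ni * r ^ ni :=
        lt_of_le_of_ne (mul_nonneg (hφ0 i ni) (pow_nonneg hr.le ni))
          (Ne.symm (mul_ne_zero hni (pow_ne_zero _ hr.ne')))
      exact hpos.trans_le (Summable.le_tsum (hφsum r hr.le hrs i) ni fun m _ =>
        mul_nonneg (hφ0 i m) (pow_nonneg hr.le m))
    have htpos : 0 < c d₀ * r ^ d₀ 0 * ∏ i : Fin k, (∑' n, φ i n * r ^ n) ^ d₀ i.succ := by
      refine mul_pos (mul_pos (lt_of_le_of_ne (hc d₀) (Ne.symm hd₀)) (pow_pos hr _)) ?_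
      exact Finset.prod_pos fun i _ => pow_pos (hφpos i) _
    have hle : c d₀ * r ^ d₀ 0 * ∏ i : Fin k, (∑' n, φ i n * r ^ n) ^ d₀ i.succ ≤ g r :=
      Summable.le_tsum (hgsum r hr.le hrs) d₀ fun d _ => hterm0 r hr.le d
    exact (htpos.trans_le hle).ne'
  · -- periods
    intro q hq i qi hqi
    have haq : ∀ n : ℕ, iteratedDeriv n G 0 / (n.factorial : ℝ) = a n := by
      intro n
      rw [hDeriv n, mul_div_cancel_left₀]
      exact_mod_cast n.factorial_ne_zero
    obtain ⟨d, hd, hdi⟩ := hFi i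
    choose nb hnb using hφne
    set e : ℕ → ∀ j : Fin k, Fin (d j.succ) → ℕ :=
      fun m j t => if j = i ∧ (t : ℕ) = 0 then m else nb j with hedef
    set K : ℕ := d 0 + (d i.succ - 1) * nb i + ∑ j ∈ Finset.univ.erase i, d j.succ * nb j
      with hKdef
    have hDeg : ∀ m : ℕ, degJ k ⟨d, e m⟩ = m + K := by
      intro m
      have hsplit : (∑ j : Fin k, ∑ t, e m j t)
          = (∑ t : Fin (d i.succ), e m i t)
            + ∑ j ∈ Finset.univ.erase i, ∑ t, e m j t :=
        (Finset.add_sum_erase _ _ (Finset.mem_univ i)).symm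
      have hblock : (∑ t : Fin (d i.succ), e m i t) = m + (d i.succ - 1) * nb i := by
        have hval : ∀ t : Fin (d i.succ), e m i t = if (t : ℕ) = 0 then m else nb i := by
          intro t
          simp only [hedef]
          by_cases hcnd : (t : ℕ) = 0 <;> simp [hcnd]
        rw [Finset.sum_congr rfl fun t _ => hval t]
        exact sum_if_zero _ hdi _ _
      have hrest : ∀ j ∈ Finset.univ.erase i, (∑ t, e m j t) = d j.succ * nb j := by
        intro j hj
        have hji : j ≠ i := Finset.ne_of_mem_erase hj
        have hval : ∀ t : Fin (d j.succ), e m j t = nb j := by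
          intro t
          simp only [hedef]
          simp [hji]
        rw [Finset.sum_congr rfl fun t _ => hval t, Finset.sum_const, Finset.card_univ,
          Fintype.card_fin, smul_eq_mul]
      show d 0 + (∑ j : Fin k, ∑ t, e m j t) = m + K
      rw [hsplit, hblock, Finset.sum_congr rfl hrest, hKdef]
      ring
    have hWpos : ∀ m : ℕ, φ i m ≠ 0 → Wgt k c φ ⟨d, e m⟩ ≠ 0 := by
      intro m hm
      rw [Wgt]
      refine mul_ne_zero ?_ ?_
      · simpa [ENNReal.ofReal_eq_zero, not_le] using lt_of_le_of_ne (hc d) (Ne.symm hd)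
      · rw [Finset.prod_ne_zero_iff]
        intro j _
        rw [Finset.prod_ne_zero_iff]
        intro t _
        show ENNReal.ofReal (φ j (e m j t)) ≠ 0
        have hval : (0 : ℝ) < φ j (e m j t) := by
          simp only [hedef]
          by_cases hcond : j = i ∧ (t : ℕ) = 0
          · rw [if_pos hcond]
            obtain ⟨hji, -⟩ := hcond
            subst hji
            exact lt_of_le_of_ne (hφ0 _ m) (Ne.symm hm)
          · rw [if_neg hcond]
            exact lt_of_le_of_ne (hφ0 j (nb j)) (Ne.symm (hnb j))
        simpa [ENNReal.ofReal_eq_zero, not_le] using hval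
    have hane : ∀ m : ℕ, φ i m ≠ 0 → a (degJ k ⟨d, e m⟩) ≠ 0 := by
      intro m hm
      have h1 : Wgt k c φ ⟨d, e m⟩ ≤ A (degJ k ⟨d, e m⟩) := by
        rw [hAdef]
        have h2 := ENNReal.le_tsum (f := fun j : Jdx k =>
          if degJ k j = degJ k ⟨d, e m⟩ then Wgt k c φ j else 0) ⟨d, e m⟩
        simpa [Acoef] using h2
      have h2 : A (degJ k ⟨d, e m⟩) ≠ 0 := fun h0 =>
        hWpos m hm (le_antisymm (h0 ▸ h1) zero_le)
      rw [hadef]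
      exact ENNReal.toReal_ne_zero.2 ⟨h2, hAfin _⟩
    refine hqi.2 q fun m m' hm hm' => ?_
    have h1 := hq.1 (degJ k ⟨d, e m⟩) (degJ k ⟨d, e m'⟩)
      (by simp only [haq]; exact hane m hm) (by simp only [haq]; exact hane m' hm')
    rw [hDeg m, hDeg m'] at h1
    have h2 : ((m + K : ℕ) : ℤ) - ((m' + K : ℕ) : ℤ) = (m : ℤ) - (m' : ℤ) := by
      push_cast
      ring
    rwa [h2] at h1


end AnalyticComb
end
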